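/- arXiv:2112.07494 — 7 statements merged into one kernel-verified Lean document; each statement's English description precedes it below -/
import Mathlib

section
/- The map sending a pair of coprime integers (a,b) with a ≥ 1 and b ≥ 0 to the pair (ν, n), where n = a²+b² and ν is the unique integer with 0 ≤ ν < n and νa ≡ b (mod n), is a bijection from {(a,b) ∈ ℤ² : a ≥ 1, b ≥ 0, gcd(a,b) = 1} onto {(ν,n) ∈ ℤ² : n ≥ 1, 0 ≤ ν < n, n ∣ ν²+1}. (In particular, a is invertible modulo a²+b², and ν ≡ a⁻¹b (mod n) satisfies ν²+1 ≡ 0 (mod n).) -/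
/-! If `n ∣ ν² + 1`, the Gaussian integer `d = gcd(n, ν - i)` has norm exactly `n`: Bézout gives
`n ∣ d d̄ = n k`, and from `n = d e` we get `d̄ = e k`, so the integer `k` divides `d̄`, hence `d`
and `ν - i`, forcing `k = 1`. For `d = a + b i`, `n = d d̄ ∣ (ν - i) d̄` says `b ≡ ν a (mod n)`, and a
unit multiple of `d` lies in the quadrant `a ≥ 1, b ≥ 0`. Two such pairs `(a, b)`, `(a', b')` for the
same `(ν, n)` satisfy `n ∣ a a' + b b'` and `0 < a a' + b b' ≤ n`, so `a a' + b b' = n`, i.e.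
`(a - a')² + (b - b')² = 0`. -/

namespace GaussianInt

open Zsqrtd

theorem norm_gcd_intCast_eq {n : ℤ} (hn : 0 < n) {v : GaussianInt} (hv : n ∣ v.norm)
    (hcop : IsCoprime v.re v.im) : (EuclideanDomain.gcd (n : GaussianInt) v).norm = n := by
  set d := EuclideanDomain.gcd (n : GaussianInt) v
  obtain ⟨m, hm⟩ := hv
  have hvv : v * star v = n * m := by rw [← norm_eq_mul_conj, hm]; push_cast; ring
  have hnd : (n : GaussianInt) ∣ d.norm := by
    have hbez : d = n * _ + v * _ := EuclideanDomain.gcd_eq_gcd_ab (n : GaussianInt) v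
    set α := EuclideanDomain.gcdA (n : GaussianInt) v
    set β := EuclideanDomain.gcdB (n : GaussianInt) v
    rw [norm_eq_mul_conj, hbez]
    refine ⟨n * (α * star α) + α * star v * star β + v * star α * β + m * (β * star β), ?_⟩
    simp only [star_add, star_mul, star_intCast]
    linear_combination (β * star β) * hvv
  obtain ⟨k, hk⟩ := (intCast_dvd_intCast _ _).mp hnd
  obtain ⟨e, he⟩ : d ∣ n := EuclideanDomain.gcd_dvd_left _ _
  have hd0 : d ≠ 0 := fun h => hn.ne' (by exact_mod_cast (EuclideanDomain.gcd_eq_zero_iff.mp h).1)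
  have hconj : star d = e * k := mul_left_cancel₀ hd0 <| by
    rw [← norm_eq_mul_conj, hk]; push_cast; rw [he, mul_assoc]
  have hkd : (k : GaussianInt) ∣ d := ⟨star e, by
    rw [← star_star d, hconj, star_mul, star_intCast, mul_comm]⟩
  obtain ⟨hkre, hkim⟩ := (intCast_dvd _ _).mp (hkd.trans (EuclideanDomain.gcd_dvd_right _ _))
  rcases Int.isUnit_iff.mp (hcop.isUnit_of_dvd' hkre hkim) with rfl | rfl
  · simpa using hk
  · nlinarith [norm_nonneg d]

end GaussianInt

section

variable {a b n ν : ℤ}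

theorem mul_gcdA_add_mul_gcdB_eq_one (h : IsCoprime a n) :
    a * Int.gcdA a n + n * Int.gcdB a n = 1 := by
  rw [← Int.gcd_eq_gcd_ab, Int.isCoprime_iff_gcd_eq_one.mp h, Nat.cast_one]

/-- The representative in `[0, |n|)` of `b * a⁻¹` modulo `n`; meaningful when `IsCoprime a n`. -/
def mulInvMod (b a n : ℤ) : ℤ := b * Int.gcdA a n % n

theorem mulInvMod_nonneg (hn : n ≠ 0) : 0 ≤ mulInvMod b a n := Int.emod_nonneg _ hn

theorem mulInvMod_lt (hn : 0 < n) : mulInvMod b a n < n := Int.emod_lt_of_pos _ hn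

theorem dvd_sub_mulInvMod_mul (h : IsCoprime a n) : n ∣ b - mulInvMod b a n * a := by
  refine ⟨b * Int.gcdB a n + b * Int.gcdA a n / n * a, ?_⟩
  rw [mulInvMod, Int.emod_def]
  linear_combination -b * mul_gcdA_add_mul_gcdB_eq_one h

theorem mulInvMod_eq (h : IsCoprime a n) (h0 : 0 ≤ ν) (h1 : ν < n)
    (hab : n ∣ b - ν * a) : mulInvMod b a n = ν := by
  obtain ⟨t, ht⟩ := hab
  rw [mulInvMod, ← Int.emod_eq_of_lt h0 h1]
  refine Int.ModEq.eq (Int.modEq_iff_dvd.mpr ⟨ν * Int.gcdB a n - t * Int.gcdA a n, ?_⟩)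
  linear_combination -ν * mul_gcdA_add_mul_gcdB_eq_one h - Int.gcdA a n * ht

theorem exists_sq_add_sq_eq_of_dvd_sq_add_one (hn : 0 < n) (h : n ∣ ν ^ 2 + 1) :
    ∃ a b : ℤ, a ^ 2 + b ^ 2 = n ∧ n ∣ b - ν * a := by
  set v : GaussianInt := ⟨ν, -1⟩
  set d := EuclideanDomain.gcd (n : GaussianInt) v
  have hnorm : d.norm = n := GaussianInt.norm_gcd_intCast_eq hn
    (by simpa [v, Zsqrtd.norm_def, sq] using h) isCoprime_one_right.neg_right
  obtain ⟨w, hw⟩ : d ∣ v := EuclideanDomain.gcd_dvd_right _ _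
  have hdvd : (n : GaussianInt) ∣ v * star d :=
    ⟨w, by rw [← hnorm, Zsqrtd.norm_eq_mul_conj, hw]; ring⟩
  refine ⟨d.re, d.im, ?_, dvd_sub_comm.mp ?_⟩
  · rw [← hnorm, Zsqrtd.norm_def]; ring
  · simpa [v, sub_eq_add_neg] using ((Zsqrtd.intCast_dvd _ _).mp hdvd).1

theorem exists_quadrant_of_rotate {P : ℤ → ℤ → Prop} (hP : ∀ a b, P a b → P (-b) a)
    (hab : P a b) (hne : a ≠ 0 ∨ b ≠ 0) : ∃ a' b', 1 ≤ a' ∧ 0 ≤ b' ∧ P a' b' := by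
  have h1 := hP _ _ hab
  have h2 := hP _ _ h1
  have h3 := hP _ _ h2
  simp only [neg_neg] at h2 h3
  rcases le_or_gt 1 a with ha | ha <;> rcases le_or_gt 0 b with hb | hb
  · exact ⟨a, b, ha, hb, hab⟩
  · exact ⟨-b, a, by omega, by omega, h1⟩
  · rcases eq_or_ne b 0 with rfl | hb0
    · exact ⟨-a, 0, by omega, le_rfl, by simpa using h2⟩
    · exact ⟨b, -a, by omega, by omega, h3⟩
  · rcases eq_or_ne a 0 with rfl | ha0
    · exact ⟨-b, 0, by omega, le_rfl, h1⟩
    · exact ⟨-a, -b, by omega, by omega, h2⟩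

theorem dvd_add_mul_of_dvd_sub_mul (h : n ∣ ν ^ 2 + 1) (hab : n ∣ b - ν * a) :
    n ∣ a + ν * b := by
  have : a + ν * b = a * (ν ^ 2 + 1) + ν * (b - ν * a) := by ring
  rw [this]
  exact (h.mul_left a).add (hab.mul_left ν)

theorem exists_pos_sq_add_sq_eq_of_dvd_sq_add_one (hn : 0 < n) (h : n ∣ ν ^ 2 + 1) :
    ∃ a b : ℤ, 1 ≤ a ∧ 0 ≤ b ∧ a ^ 2 + b ^ 2 = n ∧ n ∣ b - ν * a := by
  obtain ⟨a, b, hab, hdvd⟩ := exists_sq_add_sq_eq_of_dvd_sq_add_one hn h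
  refine exists_quadrant_of_rotate (P := fun a b => a ^ 2 + b ^ 2 = n ∧ n ∣ b - ν * a)
    (fun a b ⟨hab, hdvd⟩ => ⟨by rw [← hab]; ring, by simpa using dvd_add_mul_of_dvd_sub_mul h hdvd⟩)
    ⟨hab, hdvd⟩ ?_
  by_contra! h0
  rw [h0.1, h0.2] at hab
  omega

theorem isCoprime_of_dvd_sub_mul (hn : a ^ 2 + b ^ 2 = n) (hn0 : n ≠ 0)
    (h : n ∣ ν ^ 2 + 1) (hab : n ∣ b - ν * a) : IsCoprime a b := by
  obtain ⟨t, ht⟩ := hab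
  obtain ⟨s, hs⟩ := dvd_add_mul_of_dvd_sub_mul h ⟨t, ht⟩
  -- `a (a + ν b) + b (b - ν a) = a² + b² = n`
  refine ⟨s, t, mul_left_cancel₀ hn0 ?_⟩
  linear_combination -(a * hs) - b * ht + hn

theorem isCoprime_sq_add_sq (h : IsCoprime a b) : IsCoprime a (a ^ 2 + b ^ 2) := by
  simpa [sq, add_comm] using (h.pow_right (n := 2)).add_mul_left_right a

theorem dvd_sq_add_one_of_dvd_sub_mul (hcop : IsCoprime a n) (hn : n ∣ a ^ 2 + b ^ 2)
    (hab : n ∣ b - ν * a) : n ∣ ν ^ 2 + 1 := by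
  refine (hcop.pow_left (m := 2)).symm.dvd_of_dvd_mul_left ?_
  have : a ^ 2 * (ν ^ 2 + 1) = a ^ 2 + b ^ 2 - (b - ν * a) * (b + ν * a) := by ring
  rw [this]
  exact hn.sub (hab.mul_right _)

theorem dvd_sub_mulInvMod_sq_add_sq_mul (hcop : IsCoprime a b) :
    a ^ 2 + b ^ 2 ∣ b - mulInvMod b a (a ^ 2 + b ^ 2) * a :=
  dvd_sub_mulInvMod_mul (isCoprime_sq_add_sq hcop)

theorem eq_of_sq_add_sq_eq_of_dvd_sub_mul {a' b' : ℤ} (ha : 1 ≤ a) (hb : 0 ≤ b)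
    (ha' : 1 ≤ a') (hb' : 0 ≤ b') (hn : a ^ 2 + b ^ 2 = n) (hn' : a' ^ 2 + b' ^ 2 = n)
    (h : n ∣ ν ^ 2 + 1) (hab : n ∣ b - ν * a) (hab' : n ∣ b' - ν * a') :
    a = a' ∧ b = b' := by
  have hdvd : n ∣ a * a' + b * b' := by
    have : a * a' + b * b' = a * a' * (ν ^ 2 + 1) + b' * (b - ν * a) + ν * a * (b' - ν * a') := by
      ring
    rw [this]
    exact ((h.mul_left _).add (hab.mul_left _)).add (hab'.mul_left _)
  have hle := Int.le_of_dvd (by nlinarith) hdvd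
  constructor <;> nlinarith [sq_nonneg (a - a'), sq_nonneg (b - b')]

end

/-- The map sending a coprime pair `(a,b)` with `a ≥ 1`, `b ≥ 0` to `(ν, n)` with
`n = a² + b²` and `ν` the unique integer with `0 ≤ ν < n` and `ν·a ≡ b (mod n)` is a
bijection onto the set of pairs `(ν, n)` with `n ≥ 1`, `0 ≤ ν < n` and `n ∣ ν² + 1`. -/
theorem stmt1 :
    ∃ f : ℤ × ℤ → ℤ × ℤ,
      (∀ p : ℤ × ℤ, 1 ≤ p.1 → 0 ≤ p.2 → IsCoprime p.1 p.2 →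
        (f p).2 = p.1 ^ 2 + p.2 ^ 2 ∧ 0 ≤ (f p).1 ∧ (f p).1 < (f p).2 ∧
          (f p).2 ∣ (p.2 - (f p).1 * p.1)) ∧
      Set.BijOn f {p : ℤ × ℤ | 1 ≤ p.1 ∧ 0 ≤ p.2 ∧ IsCoprime p.1 p.2}
        {q : ℤ × ℤ | 1 ≤ q.2 ∧ 0 ≤ q.1 ∧ q.1 < q.2 ∧ q.2 ∣ q.1 ^ 2 + 1} := by
  have hpos : ∀ a b : ℤ, 1 ≤ a → 0 < a ^ 2 + b ^ 2 := fun a b ha => by positivity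
  refine ⟨fun p => (mulInvMod p.2 p.1 (p.1 ^ 2 + p.2 ^ 2), p.1 ^ 2 + p.2 ^ 2),
    fun p ha _ hcop => ⟨rfl, mulInvMod_nonneg (hpos _ _ ha).ne', mulInvMod_lt (hpos _ _ ha),
      dvd_sub_mulInvMod_sq_add_sq_mul hcop⟩, ?_, ?_, ?_⟩
  · rintro ⟨a, b⟩ ⟨ha, -, hcop⟩
    exact ⟨hpos a b ha, mulInvMod_nonneg (hpos a b ha).ne', mulInvMod_lt (hpos a b ha),
      dvd_sq_add_one_of_dvd_sub_mul (isCoprime_sq_add_sq hcop) dvd_rfl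
        (dvd_sub_mulInvMod_sq_add_sq_mul hcop)⟩
  · rintro ⟨a, b⟩ ⟨ha, hb, hcop⟩ ⟨a', b'⟩ ⟨ha', hb', hcop'⟩ heq
    obtain ⟨hν, hn⟩ := Prod.mk.inj heq
    have hdvd := dvd_sub_mulInvMod_sq_add_sq_mul hcop
    have hdvd' := dvd_sub_mulInvMod_sq_add_sq_mul hcop'
    dsimp only at hν hn
    rw [hn] at hν hdvd
    rw [hν] at hdvd
    obtain ⟨rfl, rfl⟩ := eq_of_sq_add_sq_eq_of_dvd_sub_mul ha hb ha' hb' hn rfl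
      (dvd_sq_add_one_of_dvd_sub_mul (isCoprime_sq_add_sq hcop') dvd_rfl hdvd') hdvd hdvd'
    rfl
  · rintro ⟨ν, n⟩ ⟨hn, h0, h1, hdvd⟩
    obtain ⟨a, b, ha, hb, rfl, hab⟩ := exists_pos_sq_add_sq_eq_of_dvd_sq_add_one hn hdvd
    have hcop := isCoprime_of_dvd_sub_mul rfl (by omega) hdvd hab
    exact ⟨(a, b), ⟨ha, hb, hcop⟩,
      Prod.ext (mulInvMod_eq (isCoprime_sq_add_sq hcop) h0 h1 hab) rfl⟩
end

section
/- Let Γ_∞ be the subgroup of SL₂(ℤ) consisting of matrices whose lower-left entry is 0 (i.e. ±(1 m; 0 1) for m ∈ ℤ), and let Stab(i) = {±I, ±(0 −1; 1 0)} be the stabilizer of i in SL₂(ℤ). The map sending σ = (a b; c d) ∈ SL₂(ℤ) to the pair ((ac+bd) mod (c²+d²), c²+d²) is constant on double cosets Γ_∞ σ Stab(i) and induces a bijection from the double coset space Γ_∞ \ SL₂(ℤ) / Stab(i) onto the set {(ν,n) ∈ ℤ² : n ≥ 1, 0 ≤ ν < n, n ∣ ν²+1} of all (root, modulus) pairs of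 the congruence X²+1 ≡ 0 (mod n). -/
/-- `SL₂(ℤ)`. -/
abbrev SL2Z := Matrix.SpecialLinearGroup (Fin 2) ℤ

/-- `Γ_∞`: the subgroup of matrices in `SL₂(ℤ)` whose lower-left entry is `0`. -/
def GammaInf : Set SL2Z := {γ | γ.1 1 0 = 0}

/-- The matrix `(0 −1; 1 0)` as an element of `SL₂(ℤ)`. -/
def wMat : SL2Z := ⟨!![0, -1; 1, 0], by norm_num [Matrix.det_fin_two_of]⟩

/-- `Stab(i) = {±I, ±(0 −1; 1 0)}`, the stabilizer of `i` in `SL₂(ℤ)`. -/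
def StabI : Set SL2Z := {1, -1, wMat, -wMat}

/-- The map `σ = (a b; c d) ↦ ((ac + bd) mod (c² + d²), c² + d²)`. -/
def rootPair (σ : SL2Z) : ℤ × ℤ :=
  ((σ.1 0 0 * σ.1 1 0 + σ.1 0 1 * σ.1 1 1) % (σ.1 1 0 ^ 2 + σ.1 1 1 ^ 2),
    σ.1 1 0 ^ 2 + σ.1 1 1 ^ 2)

/-!
Write `rowGram σ = σ σᵀ` for the Gram matrix of the rows `(a, b)`, `(c, d)` of `σ`: it is a
positive symmetric integer matrix of determinant one with bottom row `(ac + bd, c² + d²)`, and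
`rootPair σ` is that bottom row with the first entry reduced modulo the second. Since
`det (σ σᵀ) = (a² + b²)(c² + d²) - (ac + bd)² = 1`, the reduced entry is a square root of `-1`
modulo `c² + d²`.

`Stab(i) = SO₂(ℤ)` is exactly the set of `s` with `s sᵀ = 1`, so right multiplication by it fixes
the Gram matrix, while `γ = ±Tᵐ` sends it to `γ G γᵀ`, shifting `ac + bd` by `m (c² + d²)`.
Conversely a symmetric determinant-one matrix is determined by its bottom row, so if `σ` and `τ`
have the same `rootPair` then `Tᵏ σ` and `τ` have the same Gram matrix for a suitable `k`, and
`(Tᵏ σ)⁻¹ τ ∈ SO₂(ℤ)`. Surjectivity is Lagrange's reduction of binary quadratic forms of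
discriminant `-4`: conjugating by a power of `T` makes `0 ≤ G₁₀ < G₁₁`, which forces
`G₀₀ < G₁₁` unless `G₁₁ = 1`, and conjugating by `S` then decreases the corner entry.
-/

open Matrix ModularGroup

lemma Int.sq_add_sq_eq_one {a b : ℤ} (h : a ^ 2 + b ^ 2 = 1) :
    (a = 1 ∨ a = -1) ∧ b = 0 ∨ a = 0 ∧ (b = 1 ∨ b = -1) := by
  have ha : -1 ≤ a ∧ a ≤ 1 := by constructor <;> nlinarith [sq_nonneg b]
  have hb : -1 ≤ b ∧ b ≤ 1 := by constructor <;> nlinarith [sq_nonneg a]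
  obtain ⟨ha₁, ha₂⟩ := ha
  obtain ⟨hb₁, hb₂⟩ := hb
  interval_cases a <;> interval_cases b <;> simp_all

lemma Matrix.IsSymm.det_fin_two {R : Type*} [CommRing R] {Q : Matrix (Fin 2) (Fin 2) R}
    (hQ : Q.IsSymm) : Q.det = Q 0 0 * Q 1 1 - Q 1 0 ^ 2 := by
  rw [Matrix.det_fin_two, hQ.apply 0 1]; ring

lemma Matrix.IsSymm.fin_two_eq_of_det_eq {R : Type*} [CommRing R] [IsDomain R]
    {Q Q' : Matrix (Fin 2) (Fin 2) R} (hQ : Q.IsSymm) (hQ' : Q'.IsSymm) (hdet : Q.det = Q'.det)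
    (h11 : Q 1 1 = Q' 1 1) (h10 : Q 1 0 = Q' 1 0) (hne : Q 1 1 ≠ 0) : Q = Q' := by
  have h00 : Q 0 0 = Q' 0 0 := by
    rw [hQ.det_fin_two, hQ'.det_fin_two, ← h11, ← h10, sub_left_inj] at hdet
    exact mul_right_cancel₀ hne hdet
  ext i j
  fin_cases i <;> fin_cases j
  · exact h00
  · simpa [hQ.apply 1 0, hQ'.apply 1 0] using h10
  · exact h10
  · exact h11

lemma Matrix.IsSymm.mul_mul_transpose {n R : Type*} [Fintype n] [CommRing R] {Q : Matrix n n R}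
    (hQ : Q.IsSymm) (A : Matrix n n R) : (A * Q * Aᵀ).IsSymm := by
  simp [IsSymm, transpose_mul, hQ.eq, Matrix.mul_assoc]

lemma Matrix.IsSymm.mul_eq_sq_add_one {R : Type*} [CommRing R] {Q : Matrix (Fin 2) (Fin 2) R}
    (hQ : Q.IsSymm) (hdet : Q.det = 1) : Q 0 0 * Q 1 1 = Q 1 0 ^ 2 + 1 := by
  rw [hQ.det_fin_two] at hdet; linear_combination hdet

section Gram

variable {n R : Type*} [Fintype n] [DecidableEq n] [CommRing R]

def rowGram (σ : Matrix.SpecialLinearGroup n R) : Matrix n n R :=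
  (σ : Matrix n n R) * (σ : Matrix n n R)ᵀ

@[simp]
lemma rowGram_one : rowGram (1 : Matrix.SpecialLinearGroup n R) = 1 := by
  simp [rowGram]

lemma rowGram_mul (ρ σ : Matrix.SpecialLinearGroup n R) :
    rowGram (ρ * σ) = (ρ : Matrix n n R) * rowGram σ * (ρ : Matrix n n R)ᵀ := by
  simp [rowGram, transpose_mul, Matrix.mul_assoc]

lemma isSymm_rowGram (σ : Matrix.SpecialLinearGroup n R) : (rowGram σ).IsSymm := by
  simp [rowGram, IsSymm, transpose_mul]

@[simp]
lemma det_rowGram (σ : Matrix.SpecialLinearGroup n R) : (rowGram σ).det = 1 := by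
  simp [rowGram]

lemma det_conj (ρ : Matrix.SpecialLinearGroup n R) (Q : Matrix n n R) :
    ((ρ : Matrix n n R) * Q * (ρ : Matrix n n R)ᵀ).det = Q.det := by
  simp

lemma rowGram_inv_mul_eq_one {ρ τ : Matrix.SpecialLinearGroup n R} (h : rowGram ρ = rowGram τ) :
    rowGram (ρ⁻¹ * τ) = 1 := by
  rw [rowGram_mul, ← h, ← rowGram_mul, inv_mul_cancel, rowGram_one]

lemma exists_rowGram_eq_of_conj (ρ : Matrix.SpecialLinearGroup n R) {Q : Matrix n n R}
    (h : ∃ σ, rowGram σ = (ρ : Matrix n n R) * Q * (ρ : Matrix n n R)ᵀ) : ∃ σ, rowGram σ = Q := by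
  obtain ⟨σ, hσ⟩ := h
  have hρ : ((ρ⁻¹ : Matrix.SpecialLinearGroup n R) : Matrix n n R) * ρ = 1 := by
    simp [adjugate_mul]
  refine ⟨ρ⁻¹ * σ, ?_⟩
  rw [rowGram_mul, hσ, ← Matrix.mul_assoc, ← Matrix.mul_assoc, hρ, Matrix.mul_assoc,
    ← transpose_mul, hρ, transpose_one, Matrix.one_mul, Matrix.mul_one]

end Gram

lemma rowGram_apply_one_one (σ : SL2Z) : rowGram σ 1 1 = σ 1 0 ^ 2 + σ 1 1 ^ 2 := by
  simp [rowGram, mul_apply, Fin.sum_univ_two, sq]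

lemma rootPair_eq (σ : SL2Z) : rootPair σ = (rowGram σ 1 0 % rowGram σ 1 1, rowGram σ 1 1) := by
  simp [rootPair, rowGram, mul_apply, Fin.sum_univ_two, sq, mul_comm]

lemma rowGram_apply_one_one_pos (σ : SL2Z) : 0 < rowGram σ 1 1 := by
  have h := (isSymm_rowGram σ).mul_eq_sq_add_one (det_rowGram σ)
  refine lt_of_le_of_ne (by rw [rowGram_apply_one_one]; positivity) fun h0 => ?_
  rw [← h0, mul_zero] at h
  linarith [sq_nonneg (rowGram σ 1 0)]

lemma conj_apply_of_mem_GammaInf {γ : SL2Z} (hγ : γ ∈ GammaInf) (Q : Matrix (Fin 2) (Fin 2) ℤ) :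
    (γ * Q * γ.1ᵀ) 1 1 = Q 1 1 ∧ (γ * Q * γ.1ᵀ) 1 0 = Q 1 0 + γ 0 1 * γ 1 1 * Q 1 1 := by
  have h10 : γ 1 0 = 0 := hγ
  have hdet : γ 0 0 * γ 1 1 = 1 := by
    have := γ.det_coe
    rwa [det_fin_two, h10, mul_zero, sub_zero] at this
  have hsq : γ 1 1 ^ 2 = 1 := by
    rcases Int.eq_one_or_neg_one_of_mul_eq_one' hdet with ⟨-, h⟩ | ⟨-, h⟩ <;> simp [h]
  simp only [mul_apply, Fin.sum_univ_two, transpose_apply, h10]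
  constructor
  · linear_combination Q 1 1 * hsq
  · linear_combination Q 1 0 * hdet

lemma T_zpow_mem_GammaInf (k : ℤ) : T ^ k ∈ GammaInf := by
  simp [GammaInf, coe_T_zpow]

lemma T_zpow_conj_apply (k : ℤ) (Q : Matrix (Fin 2) (Fin 2) ℤ) :
    ((T ^ k : SL2Z) * Q * (T ^ k : SL2Z).1ᵀ) 1 1 = Q 1 1 ∧
      ((T ^ k : SL2Z) * Q * (T ^ k : SL2Z).1ᵀ) 1 0 = Q 1 0 + k * Q 1 1 := by
  simpa [coe_T_zpow] using conj_apply_of_mem_GammaInf (T_zpow_mem_GammaInf k) Q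

@[simp]
lemma coe_wMat : (wMat : Matrix (Fin 2) (Fin 2) ℤ) = !![0, -1; 1, 0] := rfl

lemma mem_StabI_of_coe_eq {s : SL2Z} {a b : ℤ}
    (hs : (s : Matrix (Fin 2) (Fin 2) ℤ) = !![a, b; -b, a]) (hab : a ^ 2 + b ^ 2 = 1) :
    s ∈ StabI := by
  simp only [StabI, Set.mem_insert_iff, Set.mem_singleton_iff, Matrix.SpecialLinearGroup.ext_iff,
    hs, Fin.forall_fin_two]
  rcases Int.sq_add_sq_eq_one hab with ⟨rfl | rfl, rfl⟩ | ⟨rfl, rfl | rfl⟩ <;>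
    simp [Matrix.SpecialLinearGroup.coe_neg]

lemma rowGram_eq_one_iff_mem_StabI (s : SL2Z) : rowGram s = 1 ↔ s ∈ StabI := by
  refine ⟨fun h => ?_, by rintro (rfl | rfl | rfl | rfl) <;> decide⟩
  have h00 : rowGram s 0 0 = 1 := by rw [h, one_apply_eq]
  have h11 : rowGram s 1 1 = 1 := by rw [h, one_apply_eq]
  simp only [rowGram, mul_apply, Fin.sum_univ_two, transpose_apply] at h00 h11
  have hdet : s 0 0 * s 1 1 - s 0 1 * s 1 0 = 1 := by rw [← det_fin_two]; exact s.det_coe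
  -- `(d - a)² + (c + b)² = (a² + b²) + (c² + d²) - 2 (ad - bc) = 0`
  have hd : s 1 1 = s 0 0 := by nlinarith [sq_nonneg (s 1 1 - s 0 0), sq_nonneg (s 1 0 + s 0 1)]
  have hc : s 1 0 = -s 0 1 := by nlinarith [sq_nonneg (s 1 1 - s 0 0), sq_nonneg (s 1 0 + s 0 1)]
  refine mem_StabI_of_coe_eq (a := s 0 0) (b := s 0 1) ?_ (by linear_combination h00)
  exact (eta_fin_two _).trans (by rw [hd, hc])

lemma rowGram_mul_of_mem_StabI (σ : SL2Z) {s : SL2Z} (hs : s ∈ StabI) :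
    rowGram (σ * s) = rowGram σ := by
  rw [rowGram_mul, (rowGram_eq_one_iff_mem_StabI s).2 hs, Matrix.mul_one, rowGram]

theorem rootPair_mul_mul_of_mem {γ s : SL2Z} (hγ : γ ∈ GammaInf) (hs : s ∈ StabI) (σ : SL2Z) :
    rootPair (γ * σ * s) = rootPair σ := by
  obtain ⟨h11, h10⟩ := conj_apply_of_mem_GammaInf hγ (rowGram σ)
  rw [rootPair_eq, rootPair_eq, rowGram_mul_of_mem_StabI _ hs, rowGram_mul, h11, h10,
    Int.add_mul_emod_self_right]

theorem rootPair_isRoot (σ : SL2Z) : 1 ≤ (rootPair σ).2 ∧ 0 ≤ (rootPair σ).1 ∧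
    (rootPair σ).1 < (rootPair σ).2 ∧ (rootPair σ).2 ∣ (rootPair σ).1 ^ 2 + 1 := by
  have hn := rowGram_apply_one_one_pos σ
  have h := (isSymm_rowGram σ).mul_eq_sq_add_one (det_rowGram σ)
  rw [rootPair_eq]
  refine ⟨hn, Int.emod_nonneg _ hn.ne', Int.emod_lt_of_pos _ hn, ?_⟩
  rw [← Int.modEq_zero_iff_dvd]
  calc (rowGram σ 1 0 % rowGram σ 1 1) ^ 2 + 1 ≡ rowGram σ 1 0 ^ 2 + 1 [ZMOD rowGram σ 1 1] :=
        ((Int.mod_modEq _ _).pow 2).add_right 1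
    _ ≡ 0 [ZMOD rowGram σ 1 1] := Int.modEq_zero_iff_dvd.2 ⟨rowGram σ 0 0, by linarith⟩

theorem exists_mem_mul_of_rootPair_eq {σ τ : SL2Z} (h : rootPair σ = rootPair τ) :
    ∃ γ ∈ GammaInf, ∃ s ∈ StabI, τ = γ * σ * s := by
  rw [rootPair_eq, rootPair_eq, Prod.mk.injEq] at h
  obtain ⟨hν, hn⟩ := h
  rw [← hn] at hν
  obtain ⟨k, hk⟩ := Int.ModEq.dvd hν
  have hT := T_zpow_mem_GammaInf k
  obtain ⟨h11, h10⟩ := T_zpow_conj_apply k (rowGram σ)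
  have hgram : rowGram (T ^ k * σ) = rowGram τ := by
    rw [rowGram_mul]
    refine ((isSymm_rowGram σ).mul_mul_transpose _).fin_two_eq_of_det_eq (isSymm_rowGram τ)
      (by simp) (h11.trans hn) ?_ (h11.trans_ne (rowGram_apply_one_one_pos σ).ne')
    rw [h10]
    linear_combination -hk
  exact ⟨T ^ k, hT, _, (rowGram_eq_one_iff_mem_StabI _).1 (rowGram_inv_mul_eq_one hgram),
    (mul_inv_cancel_left _ _).symm⟩

theorem exists_rowGram_eq {Q : Matrix (Fin 2) (Fin 2) ℤ} (hQ : Q.IsSymm) (hdet : Q.det = 1)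
    (hpos : 0 < Q 1 1) : ∃ σ : SL2Z, rowGram σ = Q := by
  obtain ⟨N, hN⟩ : ∃ N : ℕ, Q 1 1 = N := ⟨(Q 1 1).toNat, (Int.toNat_of_nonneg hpos.le).symm⟩
  induction N using Nat.strong_induction_on generalizing Q with
  | _ N ih =>
  obtain ⟨k, hk⟩ : ∃ k : ℤ, k = -(Q 1 0 / Q 1 1) := ⟨_, rfl⟩
  apply exists_rowGram_eq_of_conj (T ^ k)
  obtain ⟨h11, h10⟩ := T_zpow_conj_apply k Q
  have hQ₁ := hQ.mul_mul_transpose (T ^ k : SL2Z)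
  have hdet₁ := (det_conj (T ^ k) Q).trans hdet
  generalize (T ^ k : SL2Z) * Q * (T ^ k : SL2Z).1ᵀ = Q₁ at h11 h10 hQ₁ hdet₁ ⊢
  have hν : Q₁ 1 0 = Q 1 0 % Q 1 1 := by rw [h10, hk, Int.emod_def]; ring
  have hm := hQ₁.mul_eq_sq_add_one hdet₁
  rw [hν, h11] at hm
  rcases (show 1 ≤ Q 1 1 from hpos).eq_or_lt with h1 | h2
  · refine ⟨1, rowGram_one.trans (isSymm_one.fin_two_eq_of_det_eq hQ₁ (by simp [hdet₁]) ?_ ?_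
      (by simp))⟩
    · rw [h11, ← h1, one_apply_eq]
    · simp [hν, ← h1]
  · have hr₀ : 0 ≤ Q 1 0 % Q 1 1 := Int.emod_nonneg _ hpos.ne'
    have hr₁ : Q 1 0 % Q 1 1 < Q 1 1 := Int.emod_lt_of_pos _ hpos
    -- with `n = Q 1 1` and `r = Q 1 0 % n`: `Q₁ 0 0 * n = r² + 1 ≤ (n - 1)² + 1 < n²`
    have hlt : Q₁ 0 0 < Q 1 1 := by nlinarith
    have hpos₁ : 0 < Q₁ 0 0 := by nlinarith
    have hS : (S * Q₁ * S.1ᵀ) 1 1 = Q₁ 0 0 := by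
      simp [mul_apply, Fin.sum_univ_two, vecMul, dotProduct]
    apply exists_rowGram_eq_of_conj S
    exact ih (Q₁ 0 0).toNat (by omega) (hQ₁.mul_mul_transpose _) ((det_conj S Q₁).trans hdet₁)
      (hS ▸ hpos₁) (by rw [hS]; omega)

theorem exists_rootPair_eq {ν n : ℤ} (hn : 1 ≤ n) (hν₀ : 0 ≤ ν) (hν : ν < n)
    (hdvd : n ∣ ν ^ 2 + 1) : ∃ σ, rootPair σ = (ν, n) := by
  obtain ⟨m, hm⟩ := hdvd
  have hQ : (!![m, ν; ν, n] : Matrix (Fin 2) (Fin 2) ℤ).IsSymm :=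
    IsSymm.ext fun i j => by fin_cases i <;> fin_cases j <;> rfl
  obtain ⟨σ, hσ⟩ := exists_rowGram_eq hQ (by rw [det_fin_two_of]; linear_combination -hm)
    (by simpa using one_pos.trans_le hn)
  refine ⟨σ, ?_⟩
  simp [rootPair_eq, hσ, Int.emod_eq_of_lt hν₀ hν]

/-- The map `rootPair` is constant on double cosets `Γ_∞ σ Stab(i)` and induces a bijection
from `Γ_∞ \ SL₂(ℤ) / Stab(i)` onto the set of (root, modulus) pairs of `X² + 1 ≡ 0 (mod n)`. -/
theorem stmt2 :
    (∀ σ τ : SL2Z, (∃ γ ∈ GammaInf, ∃ s ∈ StabI, τ = γ * σ * s) → rootPair τ = rootPair σ) ∧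
    (∀ σ : SL2Z, 1 ≤ (rootPair σ).2 ∧ 0 ≤ (rootPair σ).1 ∧ (rootPair σ).1 < (rootPair σ).2 ∧
      (rootPair σ).2 ∣ (rootPair σ).1 ^ 2 + 1) ∧
    (∀ q : ℤ × ℤ, 1 ≤ q.2 → 0 ≤ q.1 → q.1 < q.2 → q.2 ∣ q.1 ^ 2 + 1 →
      ∃ σ : SL2Z, rootPair σ = q) ∧
    (∀ σ τ : SL2Z, rootPair σ = rootPair τ → ∃ γ ∈ GammaInf, ∃ s ∈ StabI, τ = γ * σ * s) := by
  refine ⟨?_, rootPair_isRoot, fun _ => exists_rootPair_eq,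
    fun _ _ => exists_mem_mul_of_rootPair_eq⟩
  rintro σ τ ⟨γ, hγ, s, hs, rfl⟩
  exact rootPair_mul_mul_of_mem hγ hs σ
end

section
/- Fix 0 ≤ α < β ≤ π/2 and δ > 0. There is a constant C = C(δ,α,β) such that for all integers N ≥ 1, d ≥ 1 and all reals Δ ∈ (0,1], Z ∈ (0,(β−α)/2], the set S(N) of pairs (a,b) of coprime positive integers with d ∣ a²+b², N ≤ a²+b² ≤ 2N, and such that either (N ≤ a²+b² ≤ N+ΔN or 2N−ΔN ≤ a²+b² ≤ 2N) or (α ≤ arctan(b/a) ≤ α+Z or β−Z ≤ arctan(b/a) ≤ β), satisfies #S(N) ≤ C·(d^δ·N^{1/2} + N·Z/d^{1−δ} + Δ·N^{1+δ}/d). -/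
/-!
Split `S(N)` into the points near the two boundary circles and the points in the two thin
sectors at the rays `α` and `β`.

Near the circles: a primitive representation `m = a² + b²` determines the square root `b / a` of
`-1` modulo `m`, and a residue `c` coprime to `n` has at most `2 τ(n)²` square roots modulo `n`
(within one fibre of `x ↦ (gcd(n, x - x₀), gcd(n, x + x₀))` all roots are congruent modulo an
`L ≥ n / 2`). So each admissible `m = d k` carries `≪ τ(m)²` points, and near each circle there
are `≤ Δ N / d + 2` values of `k`.

In the sector `α ≤ θ ≤ α + Z`, for each `a ≤ √(2N)` the ordinate `b` lies in an interval of
length `≪ Z √N`, and `b mod d` is a square root of `-a²` modulo `d`; this gives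
`≪ √N τ(d)² (Z √N / d + 2)` points. The sector at `β` is the mirror image, in the diagonal, of
a sector at `π / 2 - β`. The divisor bound `τ(n) ≪ n^ε` with `ε = min(δ, 1/2)` finishes.
-/

open Real
open scoped Classical

/-- The set `S(N)` of boundary primitive lattice points: coprime pairs of positive integers
`(a,b)` with `d ∣ a² + b²`, `N ≤ a² + b² ≤ 2N`, lying within `ΔN` of the radial boundary of
the annulus or within angle `Z` of the rays of angles `α` and `β`. -/
noncomputable def Sbd (α β : ℝ) (d N : ℕ) (Δ Z : ℝ) : Finset (ℕ × ℕ) :=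
  ((Finset.Icc 1 (2 * N)) ×ˢ (Finset.Icc 1 (2 * N))).filter fun p =>
    Nat.Coprime p.1 p.2 ∧ d ∣ p.1 ^ 2 + p.2 ^ 2 ∧
      N ≤ p.1 ^ 2 + p.2 ^ 2 ∧ p.1 ^ 2 + p.2 ^ 2 ≤ 2 * N ∧
      ((((N : ℝ) ≤ ((p.1 ^ 2 + p.2 ^ 2 : ℕ) : ℝ) ∧
            ((p.1 ^ 2 + p.2 ^ 2 : ℕ) : ℝ) ≤ (N : ℝ) + Δ * N) ∨
          (2 * (N : ℝ) - Δ * N ≤ ((p.1 ^ 2 + p.2 ^ 2 : ℕ) : ℝ) ∧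
            ((p.1 ^ 2 + p.2 ^ 2 : ℕ) : ℝ) ≤ 2 * N)) ∨
        ((α ≤ Real.arctan ((p.2 : ℝ) / (p.1 : ℝ)) ∧
            Real.arctan ((p.2 : ℝ) / (p.1 : ℝ)) ≤ α + Z) ∨
          (β - Z ≤ Real.arctan ((p.2 : ℝ) / (p.1 : ℝ)) ∧
            Real.arctan ((p.2 : ℝ) / (p.1 : ℝ)) ≤ β)))

open Finset

theorem add_one_le_pow_of_two_le {y : ℝ} (hy : 2 ≤ y) (k : ℕ) : (k + 1 : ℝ) ≤ y ^ k := by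
  have h := one_add_mul_le_pow (show (-2 : ℝ) ≤ y - 1 by linarith) k
  rw [add_sub_cancel] at h
  nlinarith [(Nat.cast_nonneg k : (0 : ℝ) ≤ k)]

theorem exists_add_one_le_mul_pow {c : ℝ} (hc : 1 < c) :
    ∃ M : ℝ, 1 ≤ M ∧ ∀ k : ℕ, (k + 1 : ℝ) ≤ M * c ^ k := by
  refine ⟨max 1 (c - 1)⁻¹, le_max_left _ _, fun k => ?_⟩
  have hM : 1 ≤ max 1 (c - 1)⁻¹ * (c - 1) := by
    calc (1 : ℝ) = (c - 1)⁻¹ * (c - 1) := (inv_mul_cancel₀ (by linarith)).symm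
      _ ≤ _ := mul_le_mul_of_nonneg_right (le_max_right _ _) (by linarith)
  have h := one_add_mul_le_pow (show (-2 : ℝ) ≤ c - 1 by linarith) k
  rw [add_sub_cancel] at h
  nlinarith [le_max_left 1 (c - 1)⁻¹, (Nat.cast_nonneg k : (0 : ℝ) ≤ k)]

theorem natCast_rpow_eq_prod_primeFactors {n : ℕ} (hn : n ≠ 0) (ε : ℝ) :
    (n : ℝ) ^ ε = ∏ p ∈ n.primeFactors, ((p : ℝ) ^ ε) ^ n.factorization p := by
  conv_lhs => rw [← Nat.prod_factorization_pow_eq_self hn]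
  rw [Finsupp.prod, Nat.support_factorization, Nat.cast_prod, ← Real.finsetProd_rpow _ _
    (fun p _ => by positivity)]
  refine prod_congr rfl fun p _ => ?_
  rw [Nat.cast_pow, ← Real.rpow_natCast, ← Real.rpow_mul (by positivity), mul_comm,
    Real.rpow_mul (by positivity), Real.rpow_natCast]

theorem exists_card_divisors_le_mul_rpow {ε : ℝ} (hε : 0 < ε) :
    ∃ K : ℝ, 0 < K ∧ ∀ n : ℕ, n ≠ 0 → (#n.divisors : ℝ) ≤ K * (n : ℝ) ^ ε := by
  obtain ⟨M, hM1, hM⟩ := exists_add_one_le_mul_pow (Real.one_lt_rpow one_lt_two hε)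
  set B := ⌈(2 : ℝ) ^ ε⁻¹⌉₊
  refine ⟨M ^ B, by positivity, fun n hn => ?_⟩
  -- only the primes below `B` can have `p ^ ε < 2`; each of them costs at most a factor `M`
  have hlocal : ∀ p ∈ n.primeFactors, ((n.factorization p + 1 : ℕ) : ℝ) ≤
      (if p < B then M else 1) * ((p : ℝ) ^ ε) ^ n.factorization p := by
    intro p hp
    have hp2 : (2 : ℝ) ≤ p := by exact_mod_cast (Nat.prime_of_mem_primeFactors hp).two_le
    push_cast
    split_ifs with hpB
    · calc _ ≤ M * ((2 : ℝ) ^ ε) ^ n.factorization p := hM _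
        _ ≤ _ := by gcongr
    · rw [one_mul]
      refine add_one_le_pow_of_two_le ?_ _
      calc (2 : ℝ) = ((2 : ℝ) ^ ε⁻¹) ^ ε := by
            rw [← Real.rpow_mul zero_le_two, inv_mul_cancel₀ hε.ne', Real.rpow_one]
        _ ≤ (p : ℝ) ^ ε := by
            gcongr
            exact (Nat.le_ceil _).trans (by exact_mod_cast not_lt.mp hpB)
  have hsmall : ∏ p ∈ n.primeFactors, (if p < B then M else 1) ≤ M ^ B := by
    rw [prod_ite, prod_const_one, mul_one, prod_const]
    exact pow_le_pow_right₀ hM1 ((card_le_card fun p hp => mem_range.mpr (mem_filter.mp hp).2).trans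
      (card_range B).le)
  rw [Nat.card_divisors hn, natCast_rpow_eq_prod_primeFactors hn, Nat.cast_prod]
  calc _ ≤ ∏ p ∈ n.primeFactors, (if p < B then M else 1) * ((p : ℝ) ^ ε) ^ n.factorization p :=
        prod_le_prod (fun _ _ => by positivity) hlocal
    _ = _ := prod_mul_distrib
    _ ≤ _ := mul_le_mul_of_nonneg_right hsmall (by positivity)

theorem exists_two_mul_sq_card_divisors_le {ε : ℝ} (hε : 0 < ε) :
    ∃ K : ℝ, 0 < K ∧ ∀ n : ℕ, n ≠ 0 → 2 * (#n.divisors : ℝ) ^ 2 ≤ K * (n : ℝ) ^ ε := by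
  obtain ⟨K, hK, hbound⟩ := exists_card_divisors_le_mul_rpow (half_pos hε)
  refine ⟨2 * K ^ 2, by positivity, fun n hn => ?_⟩
  calc 2 * (#n.divisors : ℝ) ^ 2 ≤ 2 * (K * (n : ℝ) ^ (ε / 2)) ^ 2 := by
        gcongr; exact hbound n hn
    _ = 2 * K ^ 2 * (n : ℝ) ^ ε := by
        rw [mul_pow, ← Real.rpow_mul_natCast (by positivity)]; norm_num; ring

theorem Int.eq_or_eq_neg_of_dvd_of_abs_lt {L t : ℤ} (h : L ∣ t) (ht : t ≠ 0) (hlt : |t| < 2 * L) :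
    t = L ∨ t = -L := by
  obtain ⟨s, rfl⟩ := h
  have hL : 0 < L := by linarith [abs_nonneg (L * s)]
  rw [abs_mul, abs_of_pos hL] at hlt
  have hs : |s| < 2 := lt_of_mul_lt_mul_left (by linarith) hL.le
  have hs0 : s ≠ 0 := by rintro rfl; simp at ht
  rcases abs_lt.mp hs with ⟨h1, h2⟩
  interval_cases s <;> simp_all

theorem card_le_two_of_dvd_sub {d L : ℕ} (hdL : d ≤ 2 * L) (S : Finset ℕ) (hS : ∀ x ∈ S, x < d)
    (hdvd : ∀ x ∈ S, ∀ y ∈ S, (L : ℤ) ∣ (x : ℤ) - y) : #S ≤ 2 := by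
  by_contra! h
  obtain ⟨x, hx, y, hy, z, hz, hxy, hxz, hyz⟩ := two_lt_card.mp h
  have key : ∀ u ∈ S, ∀ v ∈ S, u ≠ v → (u : ℤ) - v = L ∨ (u : ℤ) - v = -L := fun u hu v hv huv =>
    Int.eq_or_eq_neg_of_dvd_of_abs_lt (hdvd u hu v hv) (by omega)
      (abs_lt.mpr ⟨by have := hS v hv; omega, by have := hS u hu; omega⟩)
  rcases key x hx y hy hxy with h1 | h1 <;> rcases key y hy z hz hyz with h2 | h2 <;>
    rcases key x hx z hz hxz with h3 | h3 <;> omega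

theorem Int.isCoprime_of_dvd_sq_add {d x c : ℤ} (hc : IsCoprime c d) (h : d ∣ x ^ 2 + c) :
    IsCoprime x d := by
  obtain ⟨k, hk⟩ := h
  have : IsCoprime (-c + d * k) d := hc.neg_left.add_mul_left_left k
  rw [show -c + d * k = x ^ 2 by rw [← hk]; ring] at this
  exact (IsCoprime.pow_left_iff two_pos).mp this

theorem Int.dvd_two_mul_lcm_gcd_sub_gcd_add {d x y c : ℤ} (hx : d ∣ x ^ 2 + c)
    (hy : d ∣ y ^ 2 + c) (hyd : IsCoprime y d) :
    d ∣ 2 * (Nat.lcm (d.gcd (x - y)) (d.gcd (x + y)) : ℤ) := by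
  set e := d.gcd (x - y)
  set f := d.gcd (x + y)
  have hef : d ∣ (e : ℤ) * f := by
    refine Int.dvd_gcd_mul_gcd_iff_dvd_mul.mpr ?_
    rw [show (x - y) * (x + y) = (x ^ 2 + c) - (y ^ 2 + c) by ring]
    exact dvd_sub hx hy
  have hg : (Nat.gcd e f : ℤ) ∣ 2 := by
    have hsub : (Nat.gcd e f : ℤ) ∣ x - y :=
      (Int.natCast_dvd_natCast.mpr (Nat.gcd_dvd_left e f)).trans (Int.gcd_dvd_right _ _)
    have hadd : (Nat.gcd e f : ℤ) ∣ x + y :=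
      (Int.natCast_dvd_natCast.mpr (Nat.gcd_dvd_right e f)).trans (Int.gcd_dvd_right _ _)
    have hd : (Nat.gcd e f : ℤ) ∣ d :=
      (Int.natCast_dvd_natCast.mpr (Nat.gcd_dvd_left e f)).trans (Int.gcd_dvd_left _ _)
    refine (hyd.symm.of_isCoprime_of_dvd_left hd).dvd_of_dvd_mul_left ?_
    rw [show y * 2 = (x + y) - (x - y) by ring]
    exact dvd_sub hadd hsub
  rw [show (e : ℤ) * f = (Nat.gcd e f : ℤ) * Nat.lcm e f by
    exact_mod_cast (Nat.gcd_mul_lcm e f).symm] at hef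
  exact hef.trans (mul_dvd_mul_right hg _)

theorem card_filter_dvd_sq_add_le {d c : ℕ} (hd : d ≠ 0) (hc : c.Coprime d) :
    #{x ∈ range d | d ∣ x ^ 2 + c} ≤ 2 * #d.divisors ^ 2 := by
  set S := {x ∈ range d | d ∣ x ^ 2 + c}
  have hS : ∀ x ∈ S, x < d ∧ (d : ℤ) ∣ (x : ℤ) ^ 2 + c := fun x hx => by
    rw [mem_filter, mem_range] at hx; exact ⟨hx.1, by exact_mod_cast hx.2⟩
  rcases S.eq_empty_or_nonempty with hS0 | ⟨x₀, hx₀⟩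
  · simp [hS0]
  have hc' : IsCoprime (c : ℤ) d := Nat.isCoprime_iff_coprime.mpr hc
  have hx₀d := Int.isCoprime_of_dvd_sq_add hc' (hS x₀ hx₀).2
  -- the fibres of `F` are residue classes modulo `lcm(e, f) ≥ d / 2`
  set F : ℕ → ℕ × ℕ := fun x => ((d : ℤ).gcd (x - x₀), (d : ℤ).gcd (x + x₀))
  have hfiber : ∀ q ∈ S.image F, #{x ∈ S | F x = q} ≤ 2 := by
    intro q hq
    obtain ⟨x₁, hx₁, rfl⟩ := mem_image.mp hq
    refine card_le_two_of_dvd_sub (L := Nat.lcm (F x₁).1 (F x₁).2) ?_ _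
      (fun x hx => (hS x (mem_filter.mp hx).1).1) ?_
    · have := Int.dvd_two_mul_lcm_gcd_sub_gcd_add (hS x₁ hx₁).2 (hS x₀ hx₀).2 hx₀d
      exact Nat.le_of_dvd (by positivity)
        (Int.natCast_dvd_natCast.mp (by rw [Nat.cast_mul, Nat.cast_ofNat]; exact this))
    · have hdvd : ∀ x ∈ {x ∈ S | F x = F x₁},
          ((F x₁).1 : ℤ) ∣ (x : ℤ) - x₀ ∧ ((F x₁).2 : ℤ) ∣ (x : ℤ) + x₀ := fun x hx => by
        rw [← (mem_filter.mp hx).2]; exact ⟨Int.gcd_dvd_right _ _, Int.gcd_dvd_right _ _⟩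
      intro x hx y hy
      refine Int.ofNat_dvd_left.mpr (Nat.lcm_dvd ?_ ?_) <;> rw [← Int.ofNat_dvd_left]
      · simpa using dvd_sub (hdvd x hx).1 (hdvd y hy).1
      · simpa using dvd_sub (hdvd x hx).2 (hdvd y hy).2
  calc #S ≤ 2 * #(S.image F) := card_le_mul_card_image S 2 hfiber
    _ ≤ 2 * #(d.divisors ×ˢ d.divisors) := by
        gcongr
        intro q hq
        obtain ⟨x, -, rfl⟩ := mem_image.mp hq
        simp only [mem_product, Nat.mem_divisors, F]
        exact ⟨⟨Int.ofNat_dvd.mp (Int.gcd_dvd_left _ _), hd⟩,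
          ⟨Int.ofNat_dvd.mp (Int.gcd_dvd_left _ _), hd⟩⟩
    _ = 2 * #d.divisors ^ 2 := by rw [card_product, sq]

theorem Nat.Coprime.eq_of_mul_eq_mul {a b a' b' : ℕ} (h : a.Coprime b) (h' : a'.Coprime b')
    (hmul : b * a' = b' * a) : a = a' ∧ b = b' := by
  have ha : a = a' := Nat.dvd_antisymm
    (h.dvd_of_dvd_mul_left (hmul ▸ Dvd.intro_left b' rfl))
    (h'.dvd_of_dvd_mul_left (hmul ▸ Dvd.intro_left b rfl))
  subst ha
  refine ⟨rfl, ?_⟩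
  rcases Nat.eq_zero_or_pos a with rfl | ha
  · rw [(Nat.coprime_zero_left _).mp h, (Nat.coprime_zero_left _).mp h']
  · exact Nat.eq_of_mul_eq_mul_right ha hmul

theorem Nat.Coprime.coprime_sq_add_sq {a b : ℕ} (h : a.Coprime b) : a.Coprime (a ^ 2 + b ^ 2) := by
  rw [show a ^ 2 + b ^ 2 = b ^ 2 + a * a by ring]
  exact (Nat.coprime_add_mul_right_right a (b ^ 2) a).mpr (h.pow_right 2)

theorem mul_lt_of_sq_add_sq_eq {x y x' y' m : ℕ} (hy : 0 < y) (hy' : 0 < y')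
    (h : y ^ 2 + x ^ 2 = m) (h' : x' ^ 2 + y' ^ 2 = m) : x * x' < m := by
  refine lt_of_pow_lt_pow_left₀ 2 (Nat.zero_le m) ?_
  have hpos := Nat.mul_pos (pow_pos hy 2) (pow_pos hy' 2)
  calc (x * x') ^ 2 < (y ^ 2 + x ^ 2) * (x' ^ 2 + y' ^ 2) := by nlinarith
    _ = m ^ 2 := by rw [h, h', sq]

theorem card_coprime_sum_sq_eq_le {m : ℕ} (T : Finset (ℕ × ℕ))
    (hT : ∀ p ∈ T, p.1.Coprime p.2 ∧ 0 < p.1 ∧ 0 < p.2 ∧ p.1 ^ 2 + p.2 ^ 2 = m) :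
    #T ≤ #{x ∈ range m | m ∣ x ^ 2 + 1} := by
  rcases T.eq_empty_or_nonempty with rfl | ⟨p₀, hp₀⟩
  · simp
  have : NeZero m := ⟨by obtain ⟨-, ha, -, rfl⟩ := hT p₀ hp₀; positivity⟩
  have hunit : ∀ p ∈ T, (p.1 : ZMod m) * (p.1 : ZMod m)⁻¹ = 1 := fun p hp => by
    obtain ⟨hab, -, -, hsum⟩ := hT p hp
    exact ZMod.mul_inv_of_unit _
      ((ZMod.isUnit_iff_coprime _ _).mpr (hsum ▸ hab.coprime_sq_add_sq))
  have hsum : ∀ p ∈ T, (p.1 : ZMod m) ^ 2 + (p.2 : ZMod m) ^ 2 = 0 := fun p hp => by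
    exact_mod_cast (ZMod.natCast_eq_zero_iff _ _).mpr (hT p hp).2.2.2.symm.dvd
  -- `(a, b) ↦ b / a` sends primitive representations of `m` to square roots of `-1`
  refine card_le_card_of_injOn (fun p => ((p.2 : ZMod m) * (p.1 : ZMod m)⁻¹).val) ?_ ?_
  · intro p hp
    refine mem_coe.mpr (mem_filter.mpr ⟨mem_range.mpr (ZMod.val_lt _), ?_⟩)
    rw [← ZMod.natCast_eq_zero_iff]
    push_cast
    rw [ZMod.natCast_zmod_val]
    linear_combination ((p.1 : ZMod m)⁻¹) ^ 2 * hsum p hp -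
      ((p.1 : ZMod m) * (p.1 : ZMod m)⁻¹ + 1) * hunit p hp
  · intro p hp p' hp' heq
    obtain ⟨hab, ha, hb, hm⟩ := hT p hp
    obtain ⟨hab', ha', hb', hm'⟩ := hT p' hp'
    have hz := ZMod.val_injective m heq
    have hcross : ((p.2 * p'.1 : ℕ) : ZMod m) = ((p'.2 * p.1 : ℕ) : ZMod m) := by
      push_cast
      linear_combination (p.1 : ZMod m) * (p'.1 : ZMod m) * hz
        - (p.2 : ZMod m) * (p'.1 : ZMod m) * hunit p hp
        + (p'.2 : ZMod m) * (p.1 : ZMod m) * hunit p' hp'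
    rw [ZMod.natCast_eq_natCast_iff',
      Nat.mod_eq_of_lt (mul_lt_of_sq_add_sq_eq ha hb' hm hm'),
      Nat.mod_eq_of_lt (mul_lt_of_sq_add_sq_eq ha' hb hm' hm)] at hcross
    obtain ⟨h1, h2⟩ := hab.eq_of_mul_eq_mul hab' hcross
    exact Prod.ext h1 h2

theorem Finset.card_le_card_filter_add_card_filter {α : Type*} {s : Finset α} {p q : α → Prop}
    [DecidablePred p] [DecidablePred q] (h : ∀ x ∈ s, p x ∨ q x) :
    #s ≤ #{x ∈ s | p x} + #{x ∈ s | q x} := by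
  calc #s = #{x ∈ s | p x ∨ q x} := by rw [filter_true_of_mem h]
    _ ≤ _ := by rw [filter_or]; exact card_union_le _ _

theorem Finset.card_le_card_filter_add_add {α : Type*} {s : Finset α} {p q r : α → Prop}
    [DecidablePred p] [DecidablePred q] [DecidablePred r] (h : ∀ x ∈ s, p x ∨ q x ∨ r x) :
    #s ≤ #{x ∈ s | p x} + #{x ∈ s | q x} + #{x ∈ s | r x} := by
  calc #s = #{x ∈ s | p x ∨ q x ∨ r x} := by rw [filter_true_of_mem h]
    _ ≤ _ := by
        rw [filter_or, filter_or, add_assoc]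
        exact (card_union_le _ _).trans (Nat.add_le_add_left (card_union_le _ _) _)

theorem card_Icc_floor_le {u v : ℝ} (hu : 0 ≤ u) (huv : u ≤ v) :
    (#(Icc ⌊u⌋₊ ⌊v⌋₊) : ℝ) ≤ v - u + 2 := by
  have hfl : ⌊u⌋₊ ≤ ⌊v⌋₊ + 1 := (Nat.floor_le_floor huv).trans (Nat.le_succ _)
  rw [Nat.card_Icc, Nat.cast_sub hfl]
  push_cast
  linarith [Nat.floor_le (hu.trans huv), Nat.lt_floor_add_one u]

theorem div_mem_Icc_floor {d n : ℕ} {u v : ℝ} (hu : u ≤ n) (hv : n ≤ v) :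
    n / d ∈ Icc ⌊u / d⌋₊ ⌊v / d⌋₊ := by
  rw [← Nat.floor_div_eq_div (K := ℝ), mem_Icc]
  exact ⟨Nat.floor_le_floor (by gcongr), Nat.floor_le_floor (by gcongr)⟩

theorem card_le_of_forall_dvd_of_le_of_le {d : ℕ} (hd : d ≠ 0) {u v : ℝ} (hu : 0 ≤ u) (huv : u ≤ v)
    (s : Finset ℕ) (hs : ∀ m ∈ s, d ∣ m ∧ u ≤ m ∧ m ≤ v) : (#s : ℝ) ≤ (v - u) / d + 2 := by
  have hinj : Set.InjOn (· / d) s := fun m hm m' hm' h =>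
    (Nat.div_left_inj (hs m hm).1 (hs m' hm').1).mp h
  calc (#s : ℝ) ≤ #(Icc ⌊u / d⌋₊ ⌊v / d⌋₊) := by
        exact_mod_cast card_le_card_of_injOn _
          (fun m hm => div_mem_Icc_floor (hs m hm).2.1 (hs m hm).2.2) hinj
    _ ≤ v / d - u / d + 2 := card_Icc_floor_le (by positivity) (by gcongr)
    _ = (v - u) / d + 2 := by ring

theorem card_coprime_le_sum_sq_card_divisors (T : Finset (ℕ × ℕ))
    (hT : ∀ p ∈ T, p.1.Coprime p.2 ∧ 0 < p.1 ∧ 0 < p.2) :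
    #T ≤ ∑ m ∈ T.image (fun p => p.1 ^ 2 + p.2 ^ 2), 2 * #m.divisors ^ 2 := by
  rw [card_eq_sum_card_image (fun p : ℕ × ℕ => p.1 ^ 2 + p.2 ^ 2) T]
  refine sum_le_sum fun m hm => ?_
  obtain ⟨p₀, hp₀, rfl⟩ := mem_image.mp hm
  refine (card_coprime_sum_sq_eq_le _ fun p hp => ?_).trans
    (card_filter_dvd_sq_add_le (by have := (hT p₀ hp₀).2.1; positivity) (Nat.coprime_one_left _))
  obtain ⟨hpT, hpm⟩ := mem_filter.mp hp
  exact ⟨(hT p hpT).1, (hT p hpT).2.1, (hT p hpT).2.2, hpm⟩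

theorem card_radial_le {d N : ℕ} (hd : d ≠ 0) {Δ ε K : ℝ} (hΔ : 0 ≤ Δ) (hΔ1 : Δ ≤ 1)
    (hε : 0 ≤ ε) (hK0 : 0 ≤ K) (hK : ∀ n : ℕ, n ≠ 0 → 2 * (#n.divisors : ℝ) ^ 2 ≤ K * n ^ ε)
    (T : Finset (ℕ × ℕ))
    (hT : ∀ p ∈ T, p.1.Coprime p.2 ∧ 0 < p.1 ∧ 0 < p.2 ∧ d ∣ p.1 ^ 2 + p.2 ^ 2 ∧
      ((N : ℝ) ≤ ((p.1 ^ 2 + p.2 ^ 2 : ℕ) : ℝ) ∧ ((p.1 ^ 2 + p.2 ^ 2 : ℕ) : ℝ) ≤ N + Δ * N ∨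
        2 * (N : ℝ) - Δ * N ≤ ((p.1 ^ 2 + p.2 ^ 2 : ℕ) : ℝ) ∧
          ((p.1 ^ 2 + p.2 ^ 2 : ℕ) : ℝ) ≤ 2 * N)) :
    (#T : ℝ) ≤ 2 * (Δ * N / d + 2) * (K * (2 * N) ^ ε) := by
  have hN : (0 : ℝ) ≤ N := N.cast_nonneg
  set I := T.image fun p => p.1 ^ 2 + p.2 ^ 2
  have hI : ∀ m ∈ I, m ≠ 0 ∧ d ∣ m ∧ ((N : ℝ) ≤ m ∧ (m : ℝ) ≤ N + Δ * N ∨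
      2 * (N : ℝ) - Δ * N ≤ m ∧ (m : ℝ) ≤ 2 * N) := fun m hm => by
    obtain ⟨p, hp, rfl⟩ := mem_image.mp hm
    obtain ⟨-, ha, -, h⟩ := hT p hp
    exact ⟨by positivity, h⟩
  have hcardI : (#I : ℝ) ≤ 2 * (Δ * N / d + 2) := by
    have hsplit := card_le_card_filter_add_card_filter (p := fun m : ℕ => (m : ℝ) ≤ N + Δ * N)
      (q := fun m : ℕ => 2 * (N : ℝ) - Δ * N ≤ m) fun m hm => by
        rcases (hI m hm).2.2 with h | h
        exacts [Or.inl h.2, Or.inr h.1]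
    have hΔN : Δ * N ≤ N := mul_le_of_le_one_left hN hΔ1
    have hlow := card_le_of_forall_dvd_of_le_of_le hd (u := N) (v := N + Δ * N) hN (by nlinarith)
      (I.filter fun m : ℕ => (m : ℝ) ≤ N + Δ * N) fun m hm => by
        obtain ⟨hmI, hm⟩ := mem_filter.mp hm
        obtain ⟨-, hdvd, h | h⟩ := hI m hmI
        · exact ⟨hdvd, h⟩
        · exact ⟨hdvd, by linarith [h.1], hm⟩
    have hhigh := card_le_of_forall_dvd_of_le_of_le hd (u := 2 * N - Δ * N) (v := 2 * N)
      (by linarith) (by nlinarith)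
      (I.filter fun m : ℕ => 2 * (N : ℝ) - Δ * N ≤ m) fun m hm => by
        obtain ⟨hmI, hm⟩ := mem_filter.mp hm
        obtain ⟨-, hdvd, h | h⟩ := hI m hmI
        · exact ⟨hdvd, hm, by linarith [h.2]⟩
        · exact ⟨hdvd, h⟩
    calc (#I : ℝ) ≤ #(I.filter fun m : ℕ => (m : ℝ) ≤ N + Δ * N) +
          #(I.filter fun m : ℕ => 2 * (N : ℝ) - Δ * N ≤ m) := by exact_mod_cast hsplit
      _ ≤ ((N + Δ * N - N) / d + 2) + ((2 * N - (2 * N - Δ * N)) / d + 2) := add_le_add hlow hhigh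
      _ = 2 * (Δ * N / d + 2) := by ring
  calc (#T : ℝ) ≤ ∑ m ∈ I, 2 * (#m.divisors : ℝ) ^ 2 := by
        exact_mod_cast card_coprime_le_sum_sq_card_divisors T fun p hp =>
          ⟨(hT p hp).1, (hT p hp).2.1, (hT p hp).2.2.1⟩
    _ ≤ ∑ m ∈ I, K * (2 * N) ^ ε := sum_le_sum fun m hm => by
        obtain ⟨hm0, -, h⟩ := hI m hm
        refine (hK m hm0).trans ?_
        gcongr
        rcases h with h | h <;> nlinarith
    _ ≤ _ := by
        rw [sum_const, nsmul_eq_mul]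
        gcongr

theorem card_radial_le_rpow {d N : ℕ} (hd : d ≠ 0) (hN : 1 ≤ N) {Δ δ ε K : ℝ} (hΔ : 0 ≤ Δ)
    (hΔ1 : Δ ≤ 1) (hε : 0 ≤ ε) (hεδ : ε ≤ δ) (hε2 : ε ≤ 1 / 2) (hK0 : 0 ≤ K)
    (hK : ∀ n : ℕ, n ≠ 0 → 2 * (#n.divisors : ℝ) ^ 2 ≤ K * n ^ ε) (T : Finset (ℕ × ℕ))
    (hT : ∀ p ∈ T, p.1.Coprime p.2 ∧ 0 < p.1 ∧ 0 < p.2 ∧ d ∣ p.1 ^ 2 + p.2 ^ 2 ∧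
      ((N : ℝ) ≤ ((p.1 ^ 2 + p.2 ^ 2 : ℕ) : ℝ) ∧ ((p.1 ^ 2 + p.2 ^ 2 : ℕ) : ℝ) ≤ N + Δ * N ∨
        2 * (N : ℝ) - Δ * N ≤ ((p.1 ^ 2 + p.2 ^ 2 : ℕ) : ℝ) ∧
          ((p.1 ^ 2 + p.2 ^ 2 : ℕ) : ℝ) ≤ 2 * N)) :
    (#T : ℝ) ≤ 8 * K * (d ^ δ * √N) + 4 * K * (Δ * N ^ (1 + δ) / d) := by
  have hN1 : (1 : ℝ) ≤ N := by exact_mod_cast hN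
  have hd1 : (1 : ℝ) ≤ d := by exact_mod_cast Nat.one_le_iff_ne_zero.mpr hd
  have htwo : (2 * N : ℝ) ^ ε ≤ 2 * N ^ ε := by
    rw [mul_rpow zero_le_two (by positivity)]
    gcongr
    exact (rpow_le_rpow_of_exponent_le one_le_two (by linarith)).trans_eq (rpow_one 2)
  have hNδ : (N : ℝ) ^ ε ≤ N ^ δ := rpow_le_rpow_of_exponent_le hN1 hεδ
  have hNhalf : (N : ℝ) ^ ε ≤ d ^ δ * √N := by
    rw [sqrt_eq_rpow]
    exact (rpow_le_rpow_of_exponent_le hN1 hε2).trans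
      (le_mul_of_one_le_left (by positivity) (one_le_rpow hd1 (hε.trans hεδ)))
  calc (#T : ℝ) ≤ 2 * (Δ * N / d + 2) * (K * (2 * N) ^ ε) := card_radial_le hd hΔ hΔ1 hε hK0 hK T hT
    _ ≤ 2 * (Δ * N / d + 2) * (K * (2 * N ^ ε)) := by gcongr
    _ = 8 * K * N ^ ε + 4 * K * (Δ * N * N ^ ε / d) := by ring
    _ ≤ 8 * K * (d ^ δ * √N) + 4 * K * (Δ * N * N ^ δ / d) := by gcongr
    _ = _ := by rw [rpow_add (by positivity), rpow_one, mul_assoc Δ]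

theorem card_band_fiber_le {d a : ℕ} (hd : d ≠ 0) (ha : a.Coprime d) {x M : ℝ} (hx : 0 ≤ x)
    (hM : 0 ≤ M) (s : Finset ℕ) (hs : ∀ b ∈ s, d ∣ a ^ 2 + b ^ 2 ∧ x ≤ b ∧ b ≤ x + M) :
    (#s : ℝ) ≤ 2 * #d.divisors ^ 2 * (M / d + 2) := by
  -- `b` is determined by its residue, a square root of `-a²` mod `d`, and its quotient by `d`
  have hmaps : ∀ b ∈ s, (b % d, b / d) ∈
      {r ∈ range d | d ∣ r ^ 2 + a ^ 2} ×ˢ Icc ⌊x / d⌋₊ ⌊(x + M) / d⌋₊ := fun b hb => by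
    obtain ⟨hdvd, hxb, hbx⟩ := hs b hb
    refine mem_product.mpr ⟨mem_filter.mpr ⟨mem_range.mpr (Nat.mod_lt _ (by omega)), ?_⟩,
      div_mem_Icc_floor hxb hbx⟩
    rw [add_comm] at hdvd
    exact Nat.modEq_zero_iff_dvd.mp
      ((((Nat.mod_modEq b d).pow 2).add_right _).trans (Nat.modEq_zero_iff_dvd.mpr hdvd))
  have hinj : Set.InjOn (fun b => (b % d, b / d)) s := fun b _ b' _ h => by
    simp only [Prod.mk.injEq] at h
    rw [← Nat.mod_add_div b d, ← Nat.mod_add_div b' d, h.1, h.2]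
  calc (#s : ℝ) ≤ #({r ∈ range d | d ∣ r ^ 2 + a ^ 2} ×ˢ Icc ⌊x / d⌋₊ ⌊(x + M) / d⌋₊) := by
        exact_mod_cast card_le_card_of_injOn _ hmaps hinj
    _ ≤ 2 * #d.divisors ^ 2 * ((x + M) / d - x / d + 2) := by
        rw [card_product, Nat.cast_mul]
        gcongr
        · exact_mod_cast card_filter_dvd_sq_add_le hd (ha.pow_left 2)
        · exact card_Icc_floor_le (by positivity) (by gcongr; linarith)
    _ = 2 * #d.divisors ^ 2 * (M / d + 2) := by ring

theorem card_band_le {d A : ℕ} (hd : d ≠ 0) {x : ℕ → ℝ} (hx : ∀ a, 0 ≤ x a) {M : ℝ} (hM : 0 ≤ M)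
    (T : Finset (ℕ × ℕ)) (hT : ∀ p ∈ T, p.1 ∈ Icc 1 A ∧ p.1.Coprime d ∧ d ∣ p.1 ^ 2 + p.2 ^ 2 ∧
      x p.1 ≤ p.2 ∧ p.2 ≤ x p.1 + M) :
    (#T : ℝ) ≤ A * (2 * #d.divisors ^ 2 * (M / d + 2)) := by
  have hfiber : ∀ a ∈ Icc 1 A, (#{p ∈ T | p.1 = a} : ℝ) ≤ 2 * #d.divisors ^ 2 * (M / d + 2) := by
    intro a _
    rcases ({p ∈ T | p.1 = a}).eq_empty_or_nonempty with h | ⟨p₀, hp₀⟩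
    · rw [h, card_empty, Nat.cast_zero]; positivity
    have hsnd : Set.InjOn Prod.snd (↑({p ∈ T | p.1 = a} : Finset (ℕ × ℕ)) : Set (ℕ × ℕ)) := by
      intro p hp p' hp' h
      rw [mem_coe, mem_filter] at hp hp'
      exact Prod.ext (hp.2.trans hp'.2.symm) h
    rw [← card_image_of_injOn hsnd]
    obtain ⟨hp₀T, rfl⟩ := mem_filter.mp hp₀
    refine card_band_fiber_le hd (hT p₀ hp₀T).2.1 (hx p₀.1) hM _ fun b hb => ?_
    obtain ⟨p, hp, rfl⟩ := mem_image.mp hb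
    obtain ⟨hpT, hpa⟩ := mem_filter.mp hp
    obtain ⟨-, -, h⟩ := hT p hpT
    rwa [hpa] at h
  rw [card_eq_sum_card_fiberwise fun p hp => (hT p hp).1, Nat.cast_sum]
  calc _ ≤ #(Icc 1 A) • (2 * #d.divisors ^ 2 * (M / d + 2) : ℝ) := sum_le_card_nsmul _ _ _ hfiber
    _ = _ := by rw [Nat.card_Icc, nsmul_eq_mul, add_tsub_cancel_right]

theorem tan_add_sub_tan_le {α Z γ : ℝ} (hα : 0 ≤ α) (hZ : 0 ≤ Z) (hαZ : α + Z ≤ γ)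
    (hγ : γ < π / 2) : tan (α + Z) - tan α ≤ Z / cos γ ^ 2 := by
  have hcγ : 0 < cos γ := cos_pos_of_mem_Ioo ⟨by linarith [pi_pos], hγ⟩
  have hcα : cos γ ≤ cos α := cos_le_cos_of_nonneg_of_le_pi hα (by linarith [pi_pos]) (by linarith)
  have hcαZ : cos γ ≤ cos (α + Z) :=
    cos_le_cos_of_nonneg_of_le_pi (by linarith) (by linarith [pi_pos]) hαZ
  have hcα₀ : 0 < cos α := hcγ.trans_le hcα
  have hcαZ₀ : 0 < cos (α + Z) := hcγ.trans_le hcαZ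
  have hdiff : tan (α + Z) - tan α = sin Z / (cos (α + Z) * cos α) := by
    rw [tan_eq_sin_div_cos, tan_eq_sin_div_cos, div_sub_div _ _ hcαZ₀.ne' hcα₀.ne',
      show sin Z = sin ((α + Z) - α) by ring_nf, sin_sub]
  rw [hdiff, sq]
  exact div_le_div₀ hZ (sin_le hZ) (by positivity) (mul_le_mul hcαZ hcα hcγ.le (by positivity))

theorem mem_band_of_arctan_mem {a b α Z γ : ℝ} (ha : 0 < a) (hα : 0 ≤ α) (hZ : 0 ≤ Z)
    (hαZ : α + Z ≤ γ) (hγ : γ < π / 2) (h₁ : α ≤ arctan (b / a)) (h₂ : arctan (b / a) ≤ α + Z) :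
    a * tan α ≤ b ∧ b ≤ a * tan α + a * (Z / cos γ ^ 2) := by
  have harctan : ∀ θ, -(π / 2) < θ → θ < π / 2 → (θ ≤ arctan (b / a) ↔ tan θ ≤ b / a) :=
    fun θ h₁ h₂ => by rw [← arctan_strictMono.le_iff_le (a := tan θ), arctan_tan h₁ h₂]
  have harctan' : ∀ θ, -(π / 2) < θ → θ < π / 2 → (arctan (b / a) ≤ θ ↔ b / a ≤ tan θ) :=
    fun θ h₁ h₂ => by rw [← arctan_strictMono.le_iff_le (b := tan θ), arctan_tan h₁ h₂]
  have hlo := (harctan α (by linarith [pi_pos]) (by linarith)).mp h₁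
  have hhi := (harctan' (α + Z) (by linarith [pi_pos]) (by linarith)).mp h₂
  have hgap := tan_add_sub_tan_le hα hZ hαZ hγ
  rw [le_div_iff₀ ha] at hlo
  rw [div_le_iff₀ ha] at hhi
  constructor <;> nlinarith

theorem card_sector_le {d N : ℕ} (hd : d ≠ 0) {α Z γ : ℝ} (hα : 0 ≤ α) (hZ : 0 ≤ Z)
    (hαZ : α + Z ≤ γ) (hγ : γ < π / 2) (T : Finset (ℕ × ℕ))
    (hT : ∀ p ∈ T, p.1.Coprime p.2 ∧ 0 < p.1 ∧ d ∣ p.1 ^ 2 + p.2 ^ 2 ∧ p.1 ^ 2 + p.2 ^ 2 ≤ 2 * N ∧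
      α ≤ arctan (p.2 / p.1) ∧ arctan (p.2 / p.1) ≤ α + Z) :
    (#T : ℝ) ≤ √(2 * N) * (2 * #d.divisors ^ 2 * (√(2 * N) * (Z / cos γ ^ 2) / d + 2)) := by
  have htan : 0 ≤ tan α := tan_nonneg_of_nonneg_of_le_pi_div_two hα (by linarith)
  have hle_sqrt : ∀ p ∈ T, (p.1 : ℝ) ≤ √(2 * N) := fun p hp => by
    refine le_sqrt_of_sq_le ?_
    exact_mod_cast (Nat.le_add_right _ _).trans (hT p hp).2.2.2.1
  refine (card_band_le hd (A := Nat.sqrt (2 * N)) (x := fun a => a * tan α)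
    (M := √(2 * N) * (Z / cos γ ^ 2)) (fun a => by positivity)
    (by positivity) T fun p hp => ?_).trans ?_
  · obtain ⟨hab, ha, hdvd, hN, h₁, h₂⟩ := hT p hp
    obtain ⟨hlo, hhi⟩ := mem_band_of_arctan_mem (by exact_mod_cast ha) hα hZ hαZ hγ h₁ h₂
    refine ⟨mem_Icc.mpr ⟨ha, Nat.le_sqrt'.mpr ((Nat.le_add_right _ _).trans hN)⟩,
      hab.coprime_sq_add_sq.coprime_dvd_right hdvd, hdvd, hlo, hhi.trans ?_⟩
    gcongr
    exact hle_sqrt p hp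
  · gcongr
    rw [Real.le_sqrt (by positivity) (by positivity)]
    exact_mod_cast Nat.sqrt_le' (2 * N)

theorem sqrt_two_mul_le (x : ℝ) : √(2 * x) ≤ 2 * √x := by
  rw [sqrt_mul zero_le_two]
  gcongr
  rw [sqrt_le_iff]
  norm_num

theorem card_sector_le_rpow {d N : ℕ} (hd : d ≠ 0) {α Z γ δ ε K : ℝ} (hα : 0 ≤ α) (hZ : 0 ≤ Z)
    (hαZ : α + Z ≤ γ) (hγ : γ < π / 2) (hεδ : ε ≤ δ) (hK0 : 0 ≤ K)
    (hK : 2 * (#d.divisors : ℝ) ^ 2 ≤ K * d ^ ε) (T : Finset (ℕ × ℕ))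
    (hT : ∀ p ∈ T, p.1.Coprime p.2 ∧ 0 < p.1 ∧ d ∣ p.1 ^ 2 + p.2 ^ 2 ∧ p.1 ^ 2 + p.2 ^ 2 ≤ 2 * N ∧
      α ≤ arctan (p.2 / p.1) ∧ arctan (p.2 / p.1) ≤ α + Z) :
    (#T : ℝ) ≤ 4 * K * (d ^ δ * √N) + 2 * (K / cos γ ^ 2) * (N * Z / d ^ (1 - δ)) := by
  have hd0 : (0 : ℝ) < d := by positivity
  have hdτ : 2 * (#d.divisors : ℝ) ^ 2 ≤ K * d ^ δ :=
    hK.trans (by gcongr; exact_mod_cast Nat.one_le_iff_ne_zero.mpr hd)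
  have hcγ : 0 < cos γ := cos_pos_of_mem_Ioo ⟨by linarith [pi_pos], hγ⟩
  set s := √(2 * N)
  have hs : s * s = 2 * N := mul_self_sqrt (by positivity)
  calc (#T : ℝ) ≤ s * (2 * #d.divisors ^ 2 * (s * (Z / cos γ ^ 2) / d + 2)) :=
        card_sector_le hd hα hZ hαZ hγ T hT
    _ = (s * s) * (2 * #d.divisors ^ 2) * (Z / cos γ ^ 2) / d + 2 * s * (2 * #d.divisors ^ 2) := by
        ring
    _ ≤ (2 * N) * (K * d ^ δ) * (Z / cos γ ^ 2) / d + 2 * (2 * √N) * (K * d ^ δ) := by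
        rw [hs]; gcongr; exact sqrt_two_mul_le _
    _ = _ := by rw [rpow_sub hd0, rpow_one]; field_simp; ring

theorem card_upper_sector_le_rpow {d N : ℕ} (hd : d ≠ 0) {β Z γ δ ε K : ℝ} (hβ : β ≤ π / 2)
    (hZ : 0 ≤ Z) (hγZ : γ ≤ β - Z) (hγ : 0 < γ) (hεδ : ε ≤ δ) (hK0 : 0 ≤ K)
    (hK : 2 * (#d.divisors : ℝ) ^ 2 ≤ K * d ^ ε) (T : Finset (ℕ × ℕ))
    (hT : ∀ p ∈ T, p.1.Coprime p.2 ∧ 0 < p.1 ∧ 0 < p.2 ∧ d ∣ p.1 ^ 2 + p.2 ^ 2 ∧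
      p.1 ^ 2 + p.2 ^ 2 ≤ 2 * N ∧ β - Z ≤ arctan (p.2 / p.1) ∧ arctan (p.2 / p.1) ≤ β) :
    (#T : ℝ) ≤ 4 * K * (d ^ δ * √N) + 2 * (K / sin γ ^ 2) * (N * Z / d ^ (1 - δ)) := by
  -- reflecting in the diagonal turns the angle `θ` into `π / 2 - θ`
  rw [← card_image_of_injective T Prod.swap_injective, ← cos_pi_div_two_sub]
  refine card_sector_le_rpow hd (α := π / 2 - β) (by linarith) hZ (by linarith) (by linarith)
    hεδ hK0 hK _ fun q hq => ?_
  obtain ⟨p, hp, rfl⟩ := mem_image.mp hq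
  obtain ⟨hab, ha, hb, hdvd, hN, h₁, h₂⟩ := hT p hp
  have hswap : arctan (p.1 / p.2 : ℝ) = π / 2 - arctan (p.2 / p.1) := by
    rw [← arctan_inv_of_pos (by positivity), inv_div]
  refine ⟨hab.symm, hb, by rwa [add_comm], by rwa [add_comm], ?_, ?_⟩ <;>
    simp only [Prod.fst_swap, Prod.snd_swap, hswap] <;> linarith

theorem stmt6_general (α β δ : ℝ) (hα : 0 ≤ α) (hβ : β ≤ π / 2) (hδ : 0 < δ) :
    ∃ C : ℝ, ∀ (N d : ℕ) (Δ Z : ℝ), 1 ≤ N → 1 ≤ d → 0 < Δ → Δ ≤ 1 → 0 < Z → Z ≤ (β - α) / 2 →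
      ((Sbd α β d N Δ Z).card : ℝ) ≤
        C * ((d : ℝ) ^ δ * (N : ℝ) ^ ((1 : ℝ) / 2) + (N : ℝ) * Z / (d : ℝ) ^ ((1 : ℝ) - δ) +
          Δ * (N : ℝ) ^ ((1 : ℝ) + δ) / (d : ℝ)) := by
  obtain ⟨K, hK0, hK⟩ := exists_two_mul_sq_card_divisors_le (ε := min δ (1 / 2)) (by positivity)
  set γ := (α + β) / 2 with hγ
  refine ⟨16 * K + 2 * (K / cos γ ^ 2) + 2 * (K / sin γ ^ 2),
    fun N d Δ Z hN hd hΔ hΔ1 hZ hZβ => ?_⟩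
  have hd0 : d ≠ 0 := Nat.one_le_iff_ne_zero.mp hd
  have hS : ∀ p ∈ Sbd α β d N Δ Z, p.1.Coprime p.2 ∧ 0 < p.1 ∧ 0 < p.2 ∧
      d ∣ p.1 ^ 2 + p.2 ^ 2 ∧ p.1 ^ 2 + p.2 ^ 2 ≤ 2 * N := fun p hp => by
    simp only [Sbd, mem_filter, mem_product, mem_Icc] at hp
    tauto
  have hsplit := card_le_card_filter_add_add (s := Sbd α β d N Δ Z) fun p hp => by
    simp only [Sbd, mem_filter] at hp
    exact hp.2.2.2.2.2
  refine (Nat.cast_le.mpr hsplit).trans ?_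
  rw [Nat.cast_add, Nat.cast_add]
  refine (add_le_add (add_le_add
    (card_radial_le_rpow hd0 hN hΔ.le hΔ1 (by positivity) (min_le_left _ _) (min_le_right _ _)
      hK0.le hK _ fun p hp => ?radial)
    (card_sector_le_rpow hd0 (N := N) hα hZ.le (γ := γ) (by linarith) (by linarith)
      (min_le_left _ _) hK0.le (hK d hd0) _ fun p hp => ?lower))
    (card_upper_sector_le_rpow hd0 (N := N) hβ hZ.le (γ := γ) (by linarith) (by linarith)
      (min_le_left _ _) hK0.le (hK d hd0) _ fun p hp => ?upper)).trans ?_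
  case radial | lower | upper =>
    obtain ⟨hpS, hcond⟩ := mem_filter.mp hp
    have := hS p hpS
    tauto
  have hc : 0 ≤ K / cos γ ^ 2 := by positivity
  have hs : 0 ≤ K / sin γ ^ 2 := by positivity
  have h₁ : 0 ≤ (d : ℝ) ^ δ * √N := by positivity
  have h₂ : 0 ≤ (N : ℝ) * Z / d ^ (1 - δ) := by positivity
  have h₃ : 0 ≤ Δ * (N : ℝ) ^ (1 + δ) / d := by positivity
  rw [← sqrt_eq_rpow]
  linarith [mul_nonneg hK0.le h₂, mul_nonneg hK0.le h₃, mul_nonneg hc h₁, mul_nonneg hc h₃,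
    mul_nonneg hs h₁, mul_nonneg hs h₃]

/-- Bound on the number of boundary points:
`#S(N) ≤ C(d^δ N^{1/2} + N Z / d^{1−δ} + Δ N^{1+δ}/d)`. -/
theorem stmt6 (α β δ : ℝ) (hα : 0 ≤ α) (hαβ : α < β) (hβ : β ≤ π / 2) (hδ : 0 < δ) :
    ∃ C : ℝ, ∀ (N d : ℕ) (Δ Z : ℝ), 1 ≤ N → 1 ≤ d → 0 < Δ → Δ ≤ 1 → 0 < Z → Z ≤ (β - α) / 2 →
      ((Sbd α β d N Δ Z).card : ℝ) ≤
        C * ((d : ℝ) ^ δ * (N : ℝ) ^ ((1 : ℝ) / 2) + (N : ℝ) * Z / (d : ℝ) ^ ((1 : ℝ) - δ) +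
          Δ * (N : ℝ) ^ ((1 : ℝ) + δ) / (d : ℝ)) :=
  stmt6_general α β δ hα hβ hδ
end

section
/- There is an absolute constant C such that for every even integer n and every real t with |t| ≥ 1, |Γ(1/2+it)/Γ(1/2+it+|n|/2)|^{sgn(n)} · |Γ(2it)/Γ(1/2+it−n/2)| ≤ C/√(cosh(πt)), where Γ is the complex Gamma function and sgn(n) ∈ {−1,0,1} is the sign of n (so for n = 0 the first factor equals 1). -/
/-!
On the critical line `Re s = 1/2` we have `1 - (s - m) = conj (s + m)`, so Euler's reflection
formula gives `|Γ(s + m)| |Γ(s - m)| = π / |sin (π s)| = |Γ(s)|²` for every integer `m`.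
Writing `n = 2m`, this collapses the left-hand side, for every sign of `n`, to
`|Γ(2it)| / |Γ(1/2 + it)|`. The reflection formula at `2it` and at `1/2 + it` turns the square
of this quotient into `cosh(πt) / (2|t| |sinh(2πt)|)`, which is at most `1 / cosh(πt)` because
`cosh² x ≤ sinh (2x)` for `x ≥ 1`. Hence `C = 1` works.
-/

open Real ComplexConjugate

theorem Real.cosh_sq_le_sinh_two_mul {x : ℝ} (hx : 1 ≤ x) : cosh x ^ 2 ≤ sinh (2 * x) := by
  have hexp : 2 ≤ exp x := by linarith [add_one_le_exp x]
  have hexp_neg : exp (-x) ≤ 1 / 2 := by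
    rw [exp_neg, ← one_div]; exact one_div_le_one_div_of_le two_pos hexp
  have hcosh : cosh x ≤ 2 * sinh x := by
    rw [cosh_eq, sinh_eq]; linarith
  rw [sinh_two_mul, sq]
  nlinarith [cosh_pos x]

namespace Complex

theorem norm_Gamma_mul_norm_Gamma_one_sub (z : ℂ) :
    ‖Gamma z‖ * ‖Gamma (1 - z)‖ = π / ‖sin (π * z)‖ := by
  rw [← norm_mul, Gamma_mul_Gamma_one_sub, norm_div, norm_real, norm_of_nonneg pi_pos.le]

theorem norm_Gamma_conj (z : ℂ) : ‖Gamma (conj z)‖ = ‖Gamma z‖ := by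
  rw [Gamma_conj, norm_conj]

theorem norm_Gamma_add_intCast_mul_norm_Gamma_sub_intCast {s : ℂ} (hs : s.re = 1 / 2) (m : ℤ) :
    ‖Gamma (s + m)‖ * ‖Gamma (s - m)‖ = π / ‖sin (π * s)‖ := by
  have hconj : 1 - (s - m) = conj (s + m) := by
    apply Complex.ext <;> simp [hs]; ring
  have hsin : ‖sin (π * (s - m))‖ = ‖sin (π * s)‖ := by
    rw [mul_sub, mul_comm (π : ℂ) m, sin_antiperiodic.sub_int_mul_eq]
    simp
  rw [mul_comm, ← norm_Gamma_conj (s + m), ← hconj, norm_Gamma_mul_norm_Gamma_one_sub, hsin]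

theorem norm_sin_pi_mul_half_add_I_mul (t : ℝ) :
    ‖sin (π * (1 / 2 + I * t))‖ = Real.cosh (π * t) := by
  rw [show (π : ℂ) * (1 / 2 + I * t) = ((π * t : ℝ) : ℂ) * I + π / 2 by push_cast; ring,
    sin_add_pi_div_two, cos_mul_I, ← ofReal_cosh, norm_real, norm_of_nonneg (cosh_pos _).le]

theorem norm_Gamma_I_mul_sq {u : ℝ} (hu : u ≠ 0) :
    ‖Gamma (I * u)‖ ^ 2 = π / (|u| * |Real.sinh (π * u)|) := by
  have hΓ : ‖Gamma (1 - I * u)‖ = |u| * ‖Gamma (I * u)‖ := by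
    rw [show (1 : ℂ) - I * u = -(I * u) + 1 by ring, Gamma_add_one _ (by simpa using hu),
      norm_mul, show -(I * u) = conj (I * u) by simp, norm_Gamma_conj]
    simp
  have hsin : ‖sin (π * (I * u))‖ = |Real.sinh (π * u)| := by
    rw [show (π : ℂ) * (I * u) = ((π * u : ℝ) : ℂ) * I by push_cast; ring, sin_mul_I,
      ← ofReal_sinh, norm_mul, norm_I, mul_one, norm_real, Real.norm_eq_abs]
  have h := norm_Gamma_mul_norm_Gamma_one_sub (I * u)
  rw [hΓ, hsin, eq_div_iff (by simp [pi_ne_zero, hu])] at h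
  rw [eq_div_iff (by positivity)]
  linear_combination h

theorem norm_Gamma_half_add_I_mul_sq (t : ℝ) :
    ‖Gamma (1 / 2 + I * t)‖ ^ 2 = π / Real.cosh (π * t) := by
  have h := norm_Gamma_add_intCast_mul_norm_Gamma_sub_intCast (s := 1 / 2 + I * t) (by simp) 0
  rw [norm_sin_pi_mul_half_add_I_mul] at h
  simpa [sq] using h

theorem norm_Gamma_div_zpow_sign_mul_norm_div_Gamma {s : ℂ} (hs : s.re = 1 / 2) (w : ℂ)
    {n : ℤ} (hn : Even n) :
    ‖Gamma s / Gamma (s + ((|n| : ℤ) : ℂ) / 2)‖ ^ n.sign * ‖w / Gamma (s - (n : ℂ) / 2)‖ =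
      ‖w‖ / ‖Gamma s‖ := by
  obtain ⟨m, rfl⟩ := hn
  have hΓs : ‖Gamma s‖ ≠ 0 := norm_ne_zero_iff.mpr (Gamma_ne_zero_of_re_pos (by norm_num [hs]))
  have hpair : ‖Gamma (s + m)‖ * ‖Gamma (s - m)‖ = ‖Gamma s‖ ^ 2 := by
    simpa [sq] using (norm_Gamma_add_intCast_mul_norm_Gamma_sub_intCast hs m).trans
      (norm_Gamma_add_intCast_mul_norm_Gamma_sub_intCast hs 0).symm
  have hΓsub : ‖Gamma (s - m)‖ ≠ 0 := right_ne_zero_of_mul (hpair ▸ pow_ne_zero 2 hΓs)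
  have hhalf : ((m + m : ℤ) : ℂ) / 2 = m := by push_cast; ring
  rw [hhalf, norm_div, norm_div]
  rcases lt_trichotomy m 0 with hm | rfl | hm
  · rw [abs_of_neg (by omega), Int.sign_eq_neg_one_of_neg (by omega),
      show ((-(m + m) : ℤ) : ℂ) / 2 = -m by push_cast; ring, ← sub_eq_add_neg]
    field_simp
  · simp
  · rw [abs_of_pos (by omega), Int.sign_eq_one_of_pos (by omega), hhalf, zpow_one,
      div_mul_div_comm, mul_comm ‖Gamma s‖, hpair]
    field_simp

end Complex

theorem norm_Gamma_two_mul_I_mul_div_norm_Gamma_le (t : ℝ) (ht : 1 ≤ |t|) :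
    ‖Complex.Gamma (2 * Complex.I * t)‖ / ‖Complex.Gamma (1 / 2 + Complex.I * t)‖ ≤
      1 / √(cosh (π * t)) := by
  have hcosh := cosh_pos (π * t)
  have htwo : (2 * t) ≠ 0 := by
    intro h; rw [show t = 0 by linarith, abs_zero] at ht; linarith
  have hkey : cosh (π * t) ^ 2 ≤ |2 * t| * |sinh (π * (2 * t))| := calc
    cosh (π * t) ^ 2 = cosh (π * |t|) ^ 2 := by
      rw [← cosh_abs, abs_mul, abs_of_pos pi_pos]
    _ ≤ sinh (2 * (π * |t|)) := cosh_sq_le_sinh_two_mul (by nlinarith [pi_gt_three])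
    _ = |sinh (π * (2 * t))| := by
      rw [abs_sinh, abs_mul, abs_mul, abs_of_pos pi_pos, abs_two]; ring_nf
    _ ≤ |2 * t| * |sinh (π * (2 * t))| := by
      apply le_mul_of_one_le_left (abs_nonneg _); rw [abs_mul, abs_two]; linarith
  rw [one_div √_, ← sqrt_inv, le_sqrt (by positivity) (by positivity), div_pow,
    show 2 * Complex.I * t = Complex.I * ((2 * t : ℝ) : ℂ) by push_cast; ring,
    Complex.norm_Gamma_I_mul_sq htwo, Complex.norm_Gamma_half_add_I_mul_sq]
  rw [div_div_div_cancel_left' _ _ pi_ne_zero, div_le_iff₀ ((pow_pos hcosh 2).trans_le hkey),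
    inv_mul_eq_div, le_div_iff₀ hcosh, ← sq]
  exact hkey

/-- There is an absolute constant `C` such that for every even integer `n` and every real `t`
with `|t| ≥ 1`,
`|Γ(1/2+it)/Γ(1/2+it+|n|/2)|^{sgn n} · |Γ(2it)/Γ(1/2+it−n/2)| ≤ C/√(cosh(πt))`. -/
theorem stmt12 :
    ∃ C : ℝ, ∀ n : ℤ, Even n → ∀ t : ℝ, 1 ≤ |t| →
      (‖Complex.Gamma ((1 : ℂ) / 2 + Complex.I * (t : ℂ)) /
          Complex.Gamma ((1 : ℂ) / 2 + Complex.I * (t : ℂ) + ((|n| : ℤ) : ℂ) / 2)‖) ^ (Int.sign n) *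
        ‖Complex.Gamma (2 * Complex.I * (t : ℂ)) /
          Complex.Gamma ((1 : ℂ) / 2 + Complex.I * (t : ℂ) - (n : ℂ) / 2)‖ ≤
      C / Real.sqrt (Real.cosh (π * t)) := by
  refine ⟨1, fun n hn t ht => ?_⟩
  rw [Complex.norm_Gamma_div_zpow_sign_mul_norm_div_Gamma (by simp) _ hn]
  exact norm_Gamma_two_mul_I_mul_div_norm_Gamma_le t ht
end

section
/- There is an absolute constant C such that for every even integer n, every real t with |t| ≥ 1, and every real Y with 0 < Y < 1/(2e²), Σ_{k=0}^{∞} |Γ(1/2−it−n/2+k)·Γ(1−2it) / (Γ(1/2−it−n/2)·Γ(1−2it+k))| · Y^k/k! ≤ C · Σ_{k=0}^{∞} (|n|/2+1)^k · Y^k/(k!)². -/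
/-!
With `z = 1/2 - it - n/2` and `w = 1 - 2it`, the `k`-th Gamma quotient has modulus
`∏_{j<k} |z + j| / |w + j|`, and since `|w + j|` dominates both `j + 1` and `2|t|`, each factor is
at most `M/(j+1) + 3/2` with `M = |n|/2 + 1`. The resulting `(∏_{j<k} (MY/(j+1) + 3Y/2)) / k!` is
bounded by the `k`-th coefficient of the Cauchy product of `∑ (MY)^i/(i!)^2` and
`∑ (3Y/2)^l/l! = exp (3Y/2)`, so the left-hand series is at most `exp (3Y/2)` times the
right-hand one.
-/

open Finset Nat

lemma ascPochhammer_eval_eq_prod_range {R : Type*} [CommSemiring R] (n : ℕ) (r : R) :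
    (ascPochhammer R n).eval r = ∏ j ∈ range n, (r + j) := by
  induction n with
  | zero => simp
  | succ n ih => simp [ascPochhammer_succ_right, ih, ← Finset.prod_range_succ]

lemma prod_div_factorial_le_sum_antidiagonal {x y : ℝ} (hx : 0 ≤ x) (hy : 0 ≤ y) (k : ℕ) :
    (∏ j ∈ range k, (x / (j + 1) + y)) / k ! ≤
      ∑ p ∈ antidiagonal k, x ^ p.1 / (p.1 ! : ℝ) ^ 2 * (y ^ p.2 / p.2 !) := by
  set c : ℕ × ℕ → ℝ := fun p => x ^ p.1 / (p.1 ! : ℝ) ^ 2 * (y ^ p.2 / p.2 !) with hc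
  have c_succ_fst (i l : ℕ) : c (i + 1, l) = c (i, l) * (x / (i + 1) ^ 2) := by
    simp only [hc, factorial_succ]; push_cast; field_simp; ring
  have c_succ_snd (i l : ℕ) : c (i, l + 1) = c (i, l) * (y / (l + 1)) := by
    simp only [hc, factorial_succ]; push_cast; field_simp; ring
  induction k with
  | zero => simp [hc]
  | succ k ih =>
    have hk : (0 : ℝ) < k + 1 := by positivity
    have sum_eq_weighted : ∑ p ∈ antidiagonal (k + 1), c p =
        ∑ p ∈ antidiagonal (k + 1), c p * (p.1 / (k + 1)) +
          ∑ p ∈ antidiagonal (k + 1), c p * (p.2 / (k + 1)) := by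
      rw [← sum_add_distrib]
      refine sum_congr rfl fun p hp => ?_
      have : (p.1 : ℝ) + p.2 = k + 1 := by exact_mod_cast mem_antidiagonal.mp hp
      field_simp
      linear_combination (-c p) * this
    -- `c (i, l) x / (k+1)^2` and `c (i, l) y / (k+1)` are dominated by `c (i+1, l)` and
    -- `c (i, l+1)` with weights `(i+1)/(k+1)` and `(l+1)/(k+1)`, which add up to `1` on each
    -- point of `antidiagonal (k + 1)`.
    calc (∏ j ∈ range (k + 1), (x / (j + 1) + y)) / (k + 1)!
        = (∏ j ∈ range k, (x / (j + 1) + y)) / k ! * ((x / (k + 1) + y) / (k + 1)) := by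
          rw [prod_range_succ, factorial_succ, cast_mul, cast_succ, mul_comm ((k : ℝ) + 1),
            mul_div_mul_comm]
      _ ≤ (∑ p ∈ antidiagonal k, c p) * ((x / (k + 1) + y) / (k + 1)) := by gcongr
      _ = ∑ p ∈ antidiagonal k, (c p * (x / (k + 1) ^ 2) + c p * (y / (k + 1))) := by
          rw [sum_mul]; refine sum_congr rfl fun p _ => ?_; field_simp
      _ ≤ ∑ p ∈ antidiagonal k, (c (p.1 + 1, p.2) * ((p.1 + 1 : ℕ) / (k + 1)) +
            c (p.1, p.2 + 1) * ((p.2 + 1 : ℕ) / (k + 1))) := by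
          refine sum_le_sum fun ⟨i, l⟩ hp => add_le_add ?_ (le_of_eq ?_)
          · have hi : (i : ℝ) + 1 ≤ k + 1 := by
              exact_mod_cast Finset.Nat.antidiagonal.fst_lt hp
            have hcp : 0 ≤ c (i, l) := by positivity
            rw [c_succ_fst, mul_assoc (c (i, l))]
            refine mul_le_mul_of_nonneg_left ?_ hcp
            rw [show x / ((i : ℝ) + 1) ^ 2 * (((i + 1 : ℕ) : ℝ) / (k + 1)) =
              x / ((i + 1) * (k + 1)) by push_cast; field_simp]
            exact div_le_div_of_nonneg_left hx (by positivity) (by nlinarith)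
          · rw [c_succ_snd]; push_cast; field_simp
      _ = ∑ p ∈ antidiagonal (k + 1), c p := by
          rw [sum_add_distrib, sum_eq_weighted, Finset.Nat.sum_antidiagonal_succ,
            Finset.Nat.sum_antidiagonal_succ']
          simp

namespace Complex

lemma Gamma_add_nat_div_Gamma_eq_prod {z : ℂ} (hz : ∀ m : ℕ, z ≠ -m) (n : ℕ) :
    Gamma (z + n) / Gamma z = ∏ j ∈ range n, (z + j) := by
  rw [Gamma_add_nat_div_Gamma_eq z hz, ascPochhammer_eval_eq_prod_range]

lemma norm_Gamma_ratio_eq_prod {z w : ℂ} (hz : ∀ m : ℕ, z ≠ -m) (hw : ∀ m : ℕ, w ≠ -m) (k : ℕ) :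
    ‖Gamma (z + k) * Gamma w / (Gamma z * Gamma (w + k))‖ = ∏ j ∈ range k, ‖z + j‖ / ‖w + j‖ := by
  rw [← div_div_div_eq, Gamma_add_nat_div_Gamma_eq_prod hz, Gamma_add_nat_div_Gamma_eq_prod hw,
    norm_div, norm_prod, norm_prod, prod_div_distrib]

lemma norm_add_nat_div_norm_add_nat_le {z w : ℂ} (hw_re : 1 ≤ w.re) (hw_im : 2 * |z.im| ≤ |w.im|)
    (j : ℕ) : ‖z + j‖ / ‖w + j‖ ≤ |z.re| / (j + 1) + 3 / 2 := by
  have hj : (0 : ℝ) < j + 1 := by positivity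
  have hD_re : (j : ℝ) + 1 ≤ ‖w + j‖ := by
    have := re_le_norm (w + j); simp only [add_re, natCast_re] at this; linarith
  have hD_im : 2 * |z.im| ≤ ‖w + j‖ := by
    have := abs_im_le_norm (w + j); simp only [add_im, natCast_im, add_zero] at this; linarith
  have hD : 0 < ‖w + j‖ := by linarith
  have hN : ‖z + j‖ ≤ |z.re| + j + |z.im| := by
    have := norm_le_abs_re_add_abs_im (z + j)
    simp only [add_re, natCast_re, add_im, natCast_im, add_zero] at this
    linarith [abs_add_le z.re j, abs_of_nonneg (Nat.cast_nonneg (α := ℝ) j)]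
  calc ‖z + j‖ / ‖w + j‖ ≤ (|z.re| + j + |z.im|) / ‖w + j‖ := by gcongr
    _ = |z.re| / ‖w + j‖ + j / ‖w + j‖ + |z.im| / ‖w + j‖ := by ring
    _ ≤ |z.re| / (j + 1) + 1 + 1 / 2 := by
      refine add_le_add (add_le_add ?_ ?_) ?_
      · exact div_le_div_of_nonneg_left (abs_nonneg _) hj hD_re
      · rw [div_le_one hD]; linarith
      · rw [div_le_iff₀ hD]; linarith
    _ = |z.re| / (j + 1) + 3 / 2 := by ring

lemma norm_Gamma_ratio_mul_pow_div_factorial_le {z w : ℂ} (hz : ∀ m : ℕ, z ≠ -m)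
    (hw_re : 1 ≤ w.re) (hw_im : 2 * |z.im| ≤ |w.im|) {M Y : ℝ} (hM : |z.re| ≤ M) (hY : 0 ≤ Y)
    (k : ℕ) :
    ‖Gamma (z + k) * Gamma w / (Gamma z * Gamma (w + k))‖ * Y ^ k / k ! ≤
      ∑ p ∈ antidiagonal k, (M * Y) ^ p.1 / (p.1 ! : ℝ) ^ 2 * ((3 / 2 * Y) ^ p.2 / p.2 !) := by
  have hw : ∀ m : ℕ, w ≠ -m := fun m h => by
    have := congrArg re h
    simp only [neg_re, natCast_re] at this
    linarith [(m.cast_nonneg : (0 : ℝ) ≤ m)]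
  have hM0 : 0 ≤ M := (abs_nonneg _).trans hM
  refine le_trans ?_ (prod_div_factorial_le_sum_antidiagonal (by positivity) (by positivity) k)
  rw [norm_Gamma_ratio_eq_prod hz hw, show Y ^ k = ∏ _j ∈ range k, Y by simp, ← prod_mul_distrib]
  gcongr with j
  calc ‖z + j‖ / ‖w + j‖ * Y ≤ (M / (j + 1) + 3 / 2) * Y := by
        gcongr
        exact (norm_add_nat_div_norm_add_nat_le hw_re hw_im j).trans (by gcongr)
    _ = M * Y / (j + 1) + 3 / 2 * Y := by ring

end Complex

lemma tsum_le_exp_mul_tsum_pow_div_factorial_sq {u : ℕ → ℝ} (hu : ∀ k, 0 ≤ u k) {x y : ℝ}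
    (hx : 0 ≤ x) (hy : 0 ≤ y)
    (h : ∀ k, u k ≤ ∑ p ∈ antidiagonal k, x ^ p.1 / (p.1 ! : ℝ) ^ 2 * (y ^ p.2 / p.2 !)) :
    ∑' k, u k ≤ Real.exp y * ∑' k, x ^ k / (k ! : ℝ) ^ 2 := by
  have hf : Summable fun k => x ^ k / (k ! : ℝ) ^ 2 := by
    refine (Real.summable_pow_div_factorial x).of_nonneg_of_le (fun k => by positivity) fun k => ?_
    have : (k ! : ℝ) ≤ (k ! : ℝ) ^ 2 := by
      have : (1 : ℝ) ≤ k ! := by exact_mod_cast k.factorial_pos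
      nlinarith
    gcongr
  have hg := Real.summable_pow_div_factorial y
  have hfg := hf.mul_of_nonneg hg (fun k => by positivity) (fun k => by positivity)
  have hcauchy := summable_sum_mul_antidiagonal_of_summable_mul
    (f := fun k => x ^ k / (k ! : ℝ) ^ 2) (g := fun k => y ^ k / (k ! : ℝ)) hfg
  have hexp : ∑' k, y ^ k / (k ! : ℝ) = Real.exp y := by
    rw [Real.exp_eq_exp_ℝ]; exact (NormedSpace.expSeries_div_hasSum_exp y).tsum_eq
  rw [← hexp, mul_comm, hf.tsum_mul_tsum_eq_tsum_sum_antidiagonal hg hfg]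
  exact (hcauchy.of_nonneg_of_le hu h).tsum_le_tsum h hcauchy

/-- There is an absolute constant `C` such that for every even integer `n`, every real `t` with
`|t| ≥ 1`, and every real `0 < Y < 1/(2e²)`,
`∑_{k≥0} |Γ(1/2−it−n/2+k)Γ(1−2it)/(Γ(1/2−it−n/2)Γ(1−2it+k))| · Y^k/k!
  ≤ C ∑_{k≥0} (|n|/2+1)^k Y^k/(k!)²`. -/
theorem stmt13 :
    ∃ C : ℝ, ∀ n : ℤ, Even n → ∀ t : ℝ, 1 ≤ |t| → ∀ Y : ℝ, 0 < Y → Y < 1 / (2 * Real.exp 2) →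
      (∑' k : ℕ,
          norm
            (Complex.Gamma ((1 : ℂ) / 2 - Complex.I * (t : ℂ) - (n : ℂ) / 2 + (k : ℂ)) *
                Complex.Gamma (1 - 2 * Complex.I * (t : ℂ)) /
              (Complex.Gamma ((1 : ℂ) / 2 - Complex.I * (t : ℂ) - (n : ℂ) / 2) *
                Complex.Gamma (1 - 2 * Complex.I * (t : ℂ) + (k : ℂ)))) *
            Y ^ k / (Nat.factorial k : ℝ)) ≤
        C * ∑' k : ℕ, (|(n : ℝ)| / 2 + 1) ^ k * Y ^ k / ((Nat.factorial k : ℝ)) ^ 2 := by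
  refine ⟨Real.exp 1, fun n _ t ht Y hY hY_lt => ?_⟩
  have ht0 : t ≠ 0 := by rintro rfl; norm_num at ht
  have hY_le : 3 / 2 * Y ≤ 1 := by
    have : 1 / (2 * Real.exp 2) ≤ 1 / 2 := by gcongr; simp [Real.one_le_exp zero_le_two]
    linarith
  set z : ℂ := 1 / 2 - Complex.I * t - n / 2
  have hz : ∀ m : ℕ, z ≠ -m := fun m h => ht0 (by simpa [z] using congrArg Complex.im h)
  have hz_re : |z.re| ≤ |(n : ℝ)| / 2 + 1 := by
    have hre : z.re = 1 / 2 - n / 2 := by simp [z]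
    rw [hre, abs_le]
    constructor <;> linarith [le_abs_self (n : ℝ), neg_abs_le (n : ℝ)]
  calc _ ≤ Real.exp (3 / 2 * Y) * ∑' k : ℕ, ((|(n : ℝ)| / 2 + 1) * Y) ^ k / (k ! : ℝ) ^ 2 :=
        tsum_le_exp_mul_tsum_pow_div_factorial_sq (fun k => by positivity) (by positivity)
          (by positivity) (Complex.norm_Gamma_ratio_mul_pow_div_factorial_le hz
            (by simp) (by simp [z, abs_mul]) hz_re hY.le)
    _ ≤ _ := by
      simp_rw [mul_pow]
      gcongr
end

section
/- For every Y₀ with 0 < Y₀ < 1/(2e²) there is a constant C = C(Y₀) such that for every m ∈ ℕ and every Y with 0 < Y ≤ Y₀, Σ_{k=0}^{∞} D(k)·Y^k/k! ≤ C · Σ_{k=0}^{∞} (m+1)^k · Y^k/(k!)², where D(k) = Π_{j=1}^{k} (1 + (m+1)/j) (with D(0) = 1). -/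
/-!
Write `x = m + 1`, so that `D(k) / k! = ∏_{i=1}^k (x + i) / (k!)²`. Expanding the product over the
subsets `t ⊆ {1, …, k}` and bounding the product of the elements of a `j`-subset by
`k (k - 1) ⋯ (k - j + 1)` gives `D(k) Y^k / k! ≤ ∑_{i + l = k} (Y^i / i!) (x^l Y^l / (l!)²)`, the
`k`-th coefficient of the Cauchy product of `e^Y` with the right-hand series. Hence `C = e^{Y₀}`
works.
-/

/-- `D(k) = ∏_{j=1}^k (1 + (m+1)/j)`, with `D(0) = 1`. -/
noncomputable def Dprod (m k : ℕ) : ℝ :=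
  ∏ j ∈ Finset.Icc 1 k, (1 + ((m : ℝ) + 1) / (j : ℝ))

open Finset Nat

theorem Nat.descFactorial_le_descFactorial_succ (n k : ℕ) :
    n.descFactorial k ≤ (n + 1).descFactorial k := by
  simp only [descFactorial_eq_prod_range]
  gcongr
  omega

theorem Finset.prod_le_descFactorial_card {k : ℕ} {t : Finset ℕ} (ht : t ⊆ Icc 1 k) :
    ∏ i ∈ t, i ≤ k.descFactorial #t := by
  induction k generalizing t with
  | zero => simp [subset_empty.1 ht]
  | succ k ih =>
    have mem_Icc_of_ne {i : ℕ} (hi : i ∈ t) (hne : i ≠ k + 1) : i ∈ Icc 1 k := by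
      have := mem_Icc.1 (ht hi)
      exact mem_Icc.2 ⟨this.1, Nat.lt_succ_iff.1 (lt_of_le_of_ne this.2 hne)⟩
    by_cases hk : k + 1 ∈ t
    · have hsub : t.erase (k + 1) ⊆ Icc 1 k := fun i hi =>
        mem_Icc_of_ne (mem_of_mem_erase hi) (ne_of_mem_erase hi)
      rw [← mul_prod_erase t _ hk, ← card_erase_add_one hk, succ_descFactorial_succ]
      exact Nat.mul_le_mul_left _ (ih hsub)
    · have hsub : t ⊆ Icc 1 k := fun i hi => mem_Icc_of_ne hi (by rintro rfl; exact hk hi)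
      exact (ih hsub).trans (descFactorial_le_descFactorial_succ k _)

theorem prod_Icc_add_le_sum_choose_mul_descFactorial {R : Type*} [CommSemiring R]
    [PartialOrder R] [IsOrderedRing R] {x : R} (hx : 0 ≤ x) (k : ℕ) :
    ∏ i ∈ Icc 1 k, (x + i) ≤
      ∑ p ∈ antidiagonal k, (k.choose p.1 * k.descFactorial p.1 : ℕ) * x ^ p.2 := by
  calc ∏ i ∈ Icc 1 k, (x + i)
      = ∑ t ∈ (Icc 1 k).powerset, (∏ i ∈ t, (i : R)) * x ^ (k - #t) := by
        simp_rw [add_comm x, prod_add, prod_const]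
        refine sum_congr rfl fun t ht => ?_
        rw [card_sdiff_of_subset (mem_powerset.1 ht), Nat.card_Icc, Nat.add_sub_cancel]
    _ ≤ ∑ t ∈ (Icc 1 k).powerset, (k.descFactorial #t : R) * x ^ (k - #t) := by
        gcongr with t ht
        rw [← Nat.cast_prod]
        exact Nat.mono_cast (prod_le_descFactorial_card (mem_powerset.1 ht))
    _ = _ := by
        rw [sum_powerset_apply_card (fun j => (k.descFactorial j : R) * x ^ (k - j)),
          Nat.sum_antidiagonal_eq_sum_range_succ_mk]
        simp [nsmul_eq_mul, mul_assoc]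

theorem choose_mul_descFactorial_mul_div_factorial_sq (i l : ℕ) (x Y : ℝ) :
    ((i + l).choose i * (i + l).descFactorial i : ℕ) * x ^ l * (Y ^ (i + l) / ((i + l)! : ℝ) ^ 2)
      = Y ^ i / i ! * (x ^ l * Y ^ l / (l ! : ℝ) ^ 2) := by
  have hdesc : (l ! : ℝ) * (i + l).descFactorial i = (i + l)! := by
    have := factorial_mul_descFactorial (le_add_right i l)
    rw [Nat.add_sub_cancel_left] at this
    exact_mod_cast this
  have hchoose : ((i + l).choose i : ℝ) * i ! * l ! = (i + l)! := by
    rw [choose_symm_add]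
    exact_mod_cast add_choose_mul_factorial_mul_factorial i l
  have : ((i + l)! : ℝ) ≠ 0 := by positivity
  field_simp
  push_cast
  linear_combination (x ^ l * Y ^ l * Y ^ i) *
    (((i + l).descFactorial i * l ! : ℝ) * hchoose + ((i + l)! : ℝ) * hdesc)

theorem Dprod_eq_prod_div_factorial (m k : ℕ) :
    Dprod m k = (∏ i ∈ Icc 1 k, ((m + 1 : ℝ) + i)) / k ! := by
  rw [← prod_Ico_id_eq_factorial, Ico_add_one_right_eq_Icc, cast_prod, ← prod_div_distrib]
  refine prod_congr rfl fun i hi => ?_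
  have : (i : ℝ) ≠ 0 := by have := (mem_Icc.1 hi).1; positivity
  field_simp
  ring

theorem Dprod_nonneg (m k : ℕ) : 0 ≤ Dprod m k :=
  prod_nonneg fun _ _ => by positivity

theorem Dprod_mul_pow_div_factorial_le (m k : ℕ) {Y : ℝ} (hY : 0 ≤ Y) :
    Dprod m k * Y ^ k / k ! ≤
      ∑ p ∈ antidiagonal k, Y ^ p.1 / p.1 ! * ((m + 1 : ℝ) ^ p.2 * Y ^ p.2 / (p.2 ! : ℝ) ^ 2) := by
  calc Dprod m k * Y ^ k / k !
      = (∏ i ∈ Icc 1 k, ((m + 1 : ℝ) + i)) * (Y ^ k / (k ! : ℝ) ^ 2) := by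
        rw [Dprod_eq_prod_div_factorial]
        ring
    _ ≤ (∑ p ∈ antidiagonal k, (k.choose p.1 * k.descFactorial p.1 : ℕ) * (m + 1 : ℝ) ^ p.2) *
          (Y ^ k / (k ! : ℝ) ^ 2) := by
        gcongr
        exact prod_Icc_add_le_sum_choose_mul_descFactorial (by positivity) k
    _ = _ := by
        rw [sum_mul]
        refine sum_congr rfl fun p hp => ?_
        rw [← mem_antidiagonal.1 hp]
        exact choose_mul_descFactorial_mul_div_factorial_sq p.1 p.2 _ _

theorem summable_pow_mul_pow_div_factorial_sq {x Y : ℝ} (hx : 0 ≤ x) (hY : 0 ≤ Y) :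
    Summable fun n => x ^ n * Y ^ n / (n ! : ℝ) ^ 2 := by
  refine (Real.summable_pow_div_factorial (x * Y)).of_nonneg_of_le (fun n => by positivity)
    fun n => ?_
  rw [mul_pow, sq]
  gcongr
  exact_mod_cast le_mul_of_one_le_left (zero_le _) (factorial_pos n)

theorem tsum_Dprod_mul_pow_div_factorial_le (m : ℕ) {Y : ℝ} (hY : 0 ≤ Y) :
    ∑' k, Dprod m k * Y ^ k / k ! ≤
      Real.exp Y * ∑' n, (m + 1 : ℝ) ^ n * Y ^ n / (n ! : ℝ) ^ 2 := by
  have hf : Summable fun n => ‖Y ^ n / (n ! : ℝ)‖ := (Real.summable_pow_div_factorial Y).abs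
  have hg : Summable fun n => ‖(m + 1 : ℝ) ^ n * Y ^ n / (n ! : ℝ) ^ 2‖ :=
    (summable_pow_mul_pow_div_factorial_sq (by positivity) hY).abs
  have hcauchy := (summable_norm_sum_mul_antidiagonal_of_summable_norm hf hg).of_norm
  calc ∑' k, Dprod m k * Y ^ k / k !
      ≤ ∑' k, ∑ p ∈ antidiagonal k,
          Y ^ p.1 / p.1 ! * ((m + 1 : ℝ) ^ p.2 * Y ^ p.2 / (p.2 ! : ℝ) ^ 2) :=
        Summable.tsum_le_tsum (fun k => Dprod_mul_pow_div_factorial_le m k hY)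
          (hcauchy.of_nonneg_of_le (fun k => by have := Dprod_nonneg m k; positivity)
            fun k => Dprod_mul_pow_div_factorial_le m k hY)
          hcauchy
    _ = Real.exp Y * ∑' n, (m + 1 : ℝ) ^ n * Y ^ n / (n ! : ℝ) ^ 2 := by
        rw [← tsum_mul_tsum_eq_tsum_sum_antidiagonal_of_summable_norm hf hg, Real.exp_eq_exp_ℝ,
          NormedSpace.exp_eq_tsum_div]

theorem stmt15_general (Y₀ : ℝ) :
    ∃ C : ℝ, ∀ m : ℕ, ∀ Y : ℝ, 0 < Y → Y ≤ Y₀ →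
      (∑' k : ℕ, Dprod m k * Y ^ k / (Nat.factorial k : ℝ)) ≤
        C * ∑' k : ℕ, ((m : ℝ) + 1) ^ k * Y ^ k / ((Nat.factorial k : ℝ)) ^ 2 := by
  refine ⟨Real.exp Y₀, fun m Y hY hYY => (tsum_Dprod_mul_pow_div_factorial_le m hY.le).trans ?_⟩
  have hRHS : 0 ≤ ∑' n, (m + 1 : ℝ) ^ n * Y ^ n / (n ! : ℝ) ^ 2 :=
    tsum_nonneg fun n => by positivity
  gcongr

/-- For every `0 < Y₀ < 1/(2e²)` there is `C = C(Y₀)` such that for every `m : ℕ` and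
`0 < Y ≤ Y₀`, `∑_{k≥0} D(k) Y^k / k! ≤ C ∑_{k≥0} (m+1)^k Y^k / (k!)²`. -/
theorem stmt15 (Y₀ : ℝ) (h0 : 0 < Y₀) (h1 : Y₀ < 1 / (2 * Real.exp 2)) :
    ∃ C : ℝ, ∀ m : ℕ, ∀ Y : ℝ, 0 < Y → Y ≤ Y₀ →
      (∑' k : ℕ, Dprod m k * Y ^ k / (Nat.factorial k : ℝ)) ≤
        C * ∑' k : ℕ, ((m : ℝ) + 1) ^ k * Y ^ k / ((Nat.factorial k : ℝ)) ^ 2 :=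
  stmt15_general Y₀
end

section
/- For every Y₀ with 0 < Y₀ < 1/(2e) there is a constant C = C(Y₀) such that for every m ∈ ℕ and every Y with 0 < Y ≤ Y₀, Σ_{k=0}^{∞} D(k)·Y^k/k! ≤ C · Σ_{k=0}^{m} D(k)·Y^k/k!, where D(k) = Π_{j=1}^{k} (1 + (m+1)/j) (with D(0) = 1). -/
lemma Dprod_pos (m k : ℕ) : 0 < Dprod m k := by
  apply Finset.prod_pos
  intro j hj
  have : (0:ℝ) ≤ ((m:ℝ)+1)/(j:ℝ) := by positivity
  linarith

lemma Dprod_succ (m k : ℕ) :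
    Dprod m (k+1) = Dprod m k * (1 + ((m:ℝ)+1)/((k:ℝ)+1)) := by
  unfold Dprod
  rw [Finset.prod_Icc_succ_top (by omega : 1 ≤ k+1)]
  push_cast
  ring

/-- For every `0 < Y₀ < 1/(2e)` there is `C = C(Y₀)` such that for every `m : ℕ` and
`0 < Y ≤ Y₀`, `∑_{k≥0} D(k) Y^k / k! ≤ C ∑_{k=0}^{m} D(k) Y^k / k!`. -/
theorem stmt16 (Y₀ : ℝ) (h0 : 0 < Y₀) (h1 : Y₀ < 1 / (2 * Real.exp 1)) :
    ∃ C : ℝ, ∀ m : ℕ, ∀ Y : ℝ, 0 < Y → Y ≤ Y₀ →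
      (∑' k : ℕ, Dprod m k * Y ^ k / (Nat.factorial k : ℝ)) ≤
        C * ∑ k ∈ Finset.range (m + 1), Dprod m k * Y ^ k / (Nat.factorial k : ℝ) := by
  set q : ℝ := 2 * Y₀ with hq
  have he : (1:ℝ) < Real.exp 1 := by
    have := Real.add_one_lt_exp (x := 1) one_ne_zero
    linarith
  have hq0 : 0 < q := by positivity
  have hq1 : q < 1 := by
    have h2e : (1:ℝ)/(2*Real.exp 1) < 1/2 := by
      apply div_lt_div_of_pos_left one_pos (by norm_num) (by linarith)
    have : Y₀ < 1/2 := lt_trans h1 h2e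
    simp only [hq]; linarith
  refine ⟨1 + q / (1 - q), ?_⟩
  intro m Y hY hYle
  set a : ℕ → ℝ := fun k => Dprod m k * Y ^ k / (Nat.factorial k : ℝ) with ha
  have ha_nonneg : ∀ k, 0 ≤ a k := by
    intro k
    have := Dprod_pos m k
    have : (0:ℝ) < (Nat.factorial k : ℝ) := by positivity
    positivity
  have step : ∀ k, m ≤ k → a (k+1) ≤ q * a k := by
    intro k hk
    have hfac : ((Nat.factorial (k+1) : ℝ)) = (Nat.factorial k : ℝ) * ((k:ℝ)+1) := by
      push_cast [Nat.factorial_succ]; ring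
    have hfk : (0:ℝ) < (Nat.factorial k : ℝ) := by positivity
    have hkk : (0:ℝ) < (k:ℝ)+1 := by positivity
    have heq : a (k+1) = a k * ((1 + ((m:ℝ)+1)/((k:ℝ)+1)) * (Y / ((k:ℝ)+1))) := by
      simp only [ha, Dprod_succ, hfac, pow_succ]
      field_simp
    rw [heq]
    have hfac2 : (1 + ((m:ℝ)+1)/((k:ℝ)+1)) * (Y / ((k:ℝ)+1)) ≤ q := by
      have h2 : (1 + ((m:ℝ)+1)/((k:ℝ)+1)) ≤ 2 := by
        have : ((m:ℝ)+1)/((k:ℝ)+1) ≤ 1 := by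
          rw [div_le_one hkk]
          have : (m:ℝ) ≤ (k:ℝ) := by exact_mod_cast hk
          linarith
        linarith
      have h3 : Y / ((k:ℝ)+1) ≤ Y₀ := by
        have : Y / ((k:ℝ)+1) ≤ Y := by
          rw [div_le_iff₀ hkk]
          nlinarith
        linarith
      have hYk : 0 ≤ Y / ((k:ℝ)+1) := by positivity
      have h1' : (0:ℝ) ≤ 1 + ((m:ℝ)+1)/((k:ℝ)+1) := by positivity
      calc (1 + ((m:ℝ)+1)/((k:ℝ)+1)) * (Y / ((k:ℝ)+1)) ≤ 2 * Y₀ :=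
        mul_le_mul h2 h3 hYk (by norm_num)
      _ = q := rfl
    calc a k * ((1 + ((m:ℝ)+1)/((k:ℝ)+1)) * (Y / ((k:ℝ)+1))) ≤ a k * q :=
      mul_le_mul_of_nonneg_left hfac2 (ha_nonneg k)
    _ = q * a k := mul_comm _ _
  have geom : ∀ r, a (m + r) ≤ a m * q ^ r := by
    intro r
    induction r with
    | zero => simp
    | succ n ih =>
      have := step (m + n) (Nat.le_add_right m n)
      calc a (m + (n+1)) = a ((m+n)+1) := by rw [show m + (n+1) = (m+n)+1 from by omega]
      _ ≤ q * a (m + n) := this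
      _ ≤ q * (a m * q ^ n) := mul_le_mul_of_nonneg_left ih (le_of_lt hq0)
      _ = a m * q ^ (n+1) := by ring
  have hgeo : Summable (fun r : ℕ => (a m * q) * q ^ r) :=
    (summable_geometric_of_lt_one (le_of_lt hq0) hq1).mul_left _
  have hle : ∀ r : ℕ, a (r + (m + 1)) ≤ (a m * q) * q ^ r := by
    intro r
    have := geom (r + 1)
    calc a (r + (m+1)) = a (m + (r+1)) := by rw [show r + (m+1) = m + (r+1) from by omega]
    _ ≤ a m * q ^ (r+1) := this
    _ = (a m * q) * q ^ r := by ring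
  have hsum_shift : Summable (fun r : ℕ => a (r + (m + 1))) :=
    Summable.of_nonneg_of_le (fun r => ha_nonneg _) hle hgeo
  have hsum : Summable a := (summable_nat_add_iff (m+1)).mp hsum_shift
  have hsplit := Summable.sum_add_tsum_nat_add (m+1) hsum
  have htail : (∑' r, a (r + (m+1))) ≤ a m * (q / (1 - q)) := by
    have hle' : (∑' r, a (r + (m+1))) ≤ ∑' r : ℕ, (a m * q) * q ^ r :=
      Summable.tsum_le_tsum hle hsum_shift hgeo
    have : (∑' r : ℕ, (a m * q) * q ^ r) = (a m * q) * (1 - q)⁻¹ := by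
      rw [tsum_mul_left, tsum_geometric_of_lt_one (le_of_lt hq0) hq1]
    rw [this] at hle'
    calc (∑' r, a (r + (m+1))) ≤ (a m * q) * (1-q)⁻¹ := hle'
    _ = a m * (q / (1-q)) := by ring
  have hS_nonneg : 0 ≤ ∑ k ∈ Finset.range (m+1), a k :=
    Finset.sum_nonneg (fun k _ => ha_nonneg k)
  have ham_le : a m ≤ ∑ k ∈ Finset.range (m+1), a k :=
    Finset.single_le_sum (fun k _ => ha_nonneg k) (Finset.self_mem_range_succ m)
  have h1q : 0 < 1 - q := by linarith
  have hqfrac : 0 ≤ q / (1 - q) := by positivity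
  calc (∑' k, a k) = (∑ k ∈ Finset.range (m+1), a k) + ∑' r, a (r + (m+1)) := hsplit.symm
  _ ≤ (∑ k ∈ Finset.range (m+1), a k) + a m * (q / (1-q)) := by linarith
  _ ≤ (∑ k ∈ Finset.range (m+1), a k) + (∑ k ∈ Finset.range (m+1), a k) * (q / (1-q)) := by
      have := mul_le_mul_of_nonneg_right ham_le hqfrac
      linarith
  _ = (1 + q / (1-q)) * ∑ k ∈ Finset.range (m+1), a k := by ring
end
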